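/- arXiv:1701.05844 — 7 statements merged into one kernel-verified Lean document; each statement's English description precedes it below -/
import Mathlib

section
/- Let G be a graph with a 2-edge-coloring f and let xy be a blue edge of G. Then the contracted graph G/xy (with the induced 2-edge-coloring) can be switched entirely blue if and only if G can be switched entirely blue. -/
/-- A switch at vertex `v` recolors every non-loop edge incident with `v`
(`true` = blue, `false` = red). Loops keep their color. -/
def MG.switch {V E : Type*} [DecidableEq V] (ends : E → Sym2 V) (v : V)
    (c : E → Bool) : E → Bool :=
  fun e => if v ∈ ends e ∧ ¬ (ends e).IsDiag then !(c e) else c e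

/-- Apply a finite sequence of switches. -/
def MG.switchSeq {V E : Type*} [DecidableEq V] (ends : E → Sym2 V)
    (L : List V) (c : E → Bool) : E → Bool :=
  L.foldl (fun c' v => MG.switch ends v c') c

section Aux

variable {V E : Type*} [DecidableEq V]

/-- `flipB g s` tells whether the edge with ends `s` gets flipped when we
switch at exactly the vertices where `g` is `true`. -/
def flipB (g : V → Bool) : Sym2 V → Bool :=
  Sym2.lift ⟨fun u v => xor (g u) (g v), fun u v => Bool.xor_comm _ _⟩

@[simp] lemma flipB_mk (g : V → Bool) (u v : V) : flipB g s(u, v) = xor (g u) (g v) := rfl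

lemma flipB_map {V' : Type*} (g : V' → Bool) (q : V → V') (s : Sym2 V) :
    flipB g (s.map q) = flipB (g ∘ q) s := by
  induction s using Sym2.ind with
  | _ u v => simp [flipB]

lemma switchSeq_eq (ends : E → Sym2 V) (L : List V) (c : E → Bool) (e : E) :
    MG.switchSeq ends L c e =
      xor (L.countP (fun v => decide (v ∈ ends e ∧ ¬(ends e).IsDiag))).bodd (c e) := by
  induction L generalizing c with
  | nil => simp [MG.switchSeq]
  | cons a L ih =>
    rw [show MG.switchSeq ends (a :: L) c = MG.switchSeq ends L (MG.switch ends a c) from rfl,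
      ih]
    by_cases h : a ∈ ends e ∧ ¬(ends e).IsDiag <;>
      simp [MG.switch, h, List.countP_cons, Nat.bodd_succ, Bool.not_xor, Bool.xor_not,
        Bool.xor_comm, Bool.xor_assoc]

lemma bodd_countP_pair (L : List V) (u v : V) (h : u ≠ v) :
    (L.countP (fun w => decide (w = u ∨ w = v))).bodd =
      xor (L.countP (fun w => decide (w = u))).bodd
        (L.countP (fun w => decide (w = v))).bodd := by
  induction L with
  | nil => simp
  | cons a L ih =>
    by_cases ha : a = u <;> by_cases hb : a = v <;>
      simp_all [List.countP_cons, Nat.bodd_succ, Bool.not_xor, Bool.xor_not, Bool.xor_comm,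
        Bool.xor_assoc]

lemma flipB_countP (L : List V) (s : Sym2 V) :
    flipB (fun v => (L.countP (fun w => decide (w = v))).bodd) s =
      (L.countP (fun w => decide (w ∈ s ∧ ¬ s.IsDiag))).bodd := by
  induction s using Sym2.ind with
  | _ u v =>
    by_cases h : u = v
    · subst h
      simp
    · rw [flipB_mk, ← bodd_countP_pair L u v h]
      congr 1
      refine List.countP_congr fun w _ => ?_
      simp [Sym2.mem_iff, h]

lemma exists_L_iff [Fintype V] (ends : E → Sym2 V) (c : E → Bool) :
    (∃ L : List V, ∀ e, MG.switchSeq ends L c e = true) ↔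
      (∃ g : V → Bool, ∀ e, xor (flipB g (ends e)) (c e) = true) := by
  constructor
  · rintro ⟨L, hL⟩
    refine ⟨fun v => (L.countP (fun w => decide (w = v))).bodd, fun e => ?_⟩
    have h := hL e
    rw [switchSeq_eq] at h
    rw [flipB_countP]
    exact h
  · rintro ⟨g, hg⟩
    refine ⟨(Finset.univ.filter (fun v => g v = true)).toList, fun e => ?_⟩
    rw [switchSeq_eq, ← flipB_countP]
    have hc : ∀ v, ((Finset.univ.filter (fun v => g v = true)).toList.countP
        (fun w => decide (w = v))).bodd = g v := by
      intro v
      have hcc : (Finset.univ.filter (fun v => g v = true)).toList.countP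
          (fun w => decide (w = v)) =
          (Finset.univ.filter (fun v => g v = true)).toList.count v := by
        rw [List.count]
        exact List.countP_congr fun w _ => by simp
      rw [hcc]
      by_cases hv : g v = true
      · rw [List.count_eq_one_of_mem (Finset.nodup_toList _) (by simp [hv])]
        simp [hv]
      · rw [List.count_eq_zero.2 (by simp [hv])]
        simp [Bool.not_eq_true] at hv
        simp [hv]
    have : (fun v => ((Finset.univ.filter (fun v => g v = true)).toList.countP
        (fun w => decide (w = v))).bodd) = g := funext hc
    rw [this]
    exact hg e

end Aux

/-- Let `e₀` be a blue edge with ends `x, y`.  The contraction `G/xy` has edge set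
`E \ {e₀}` and endpoint map obtained by identifying `y` with `x`; edges keep
their colors.  Then `G/xy` can be switched entirely blue iff `G` can. -/
theorem stmt3 {V E : Type*} [Fintype V] [Fintype E] [DecidableEq V] [DecidableEq E]
    (ends : E → Sym2 V) (c : E → Bool) (e₀ : E) (x y : V)
    (hblue : c e₀ = true) (hends : ends e₀ = s(x, y)) :
    (∃ L : List V, ∀ e : {e : E // e ≠ e₀},
        MG.switchSeq
          (fun e : {e : E // e ≠ e₀} => (ends e.1).map (fun v => if v = y then x else v))
          L (fun e => c e.1) e = true) ↔
      (∃ L : List V, ∀ e, MG.switchSeq ends L c e = true) := by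
  rw [exists_L_iff, exists_L_iff]
  set q : V → V := fun v => if v = y then x else v with hq
  constructor
  · rintro ⟨h, hh⟩
    refine ⟨h ∘ q, fun e => ?_⟩
    by_cases he : e = e₀
    · subst he
      rw [hends, flipB_mk]
      have hqx : q x = x := by simp [hq]
      have hqy : q y = x := by simp [hq]
      simp [Function.comp, hqx, hqy, hblue]
    · have h2 := hh ⟨e, he⟩
      rwa [flipB_map] at h2
  · rintro ⟨g, hg⟩
    have h0 := hg e₀
    rw [hends, flipB_mk, hblue] at h0
    have hxy : g x = g y := by
      revert h0
      cases g x <;> cases g y <;> simp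
    refine ⟨g, fun e => ?_⟩
    rw [flipB_map]
    have hgq : g ∘ q = g := by
      funext v
      by_cases hv : v = y <;> simp [hq, Function.comp, hv, ← hxy]
    rw [hgq]
    exact hg e.1
end

section
/- Let R be a 2-row graph with s columns such that the column-contracted graph R_C is a forest. Then there exists a subset U ⊆ {1,...,s} such that in the rearrangement R^U (obtained by swapping the two vertices within each column indexed by U), no edge joins a vertex of the first row to a vertex of the second row. -/
/-!
Shift column `j` by `f j` in an additive group `A` (for `A = Fin 2`, shifting by `1` swaps the
column, and `U` is the set of shifted columns); we want every edge `(i, j)(i', j')` to become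
horizontal, `i + f j = i' + f j'`. Induct on the edges: delete one edge `e` between columns `j`
and `j'`. Since `R_C` is a forest, `j` and `j'` lie in different components of the column graph
of `R - e`, so adding to the shift of every column in the component of `j'` the defect of `e`
repairs `e` and keeps all other edges horizontal.
-/

open SimpleGraph

variable {A ι : Type*}

def ColumnAcyclic (R : SimpleGraph (A × ι)) : Prop :=
  ¬ ∃ k > 0, ∃ (E : ℕ → Sym2 (A × ι)) (J : ℕ → ι),
      (∀ a b, a < k → b < k → E a = E b → a = b) ∧
      (∀ a b, a < k → b < k → J a = J b → a = b) ∧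
      ∀ t < k, E t ∈ R.edgeSet ∧ (E t).map Prod.snd = s(J t, J ((t + 1) % k))

def columnGraph (R : SimpleGraph (A × ι)) : SimpleGraph ι where
  Adj a b := a ≠ b ∧ ∃ x y, R.Adj (x, a) (y, b)
  symm := ⟨fun _ _ ⟨hne, x, y, h⟩ ↦ ⟨hne.symm, y, x, h.symm⟩⟩
  loopless := ⟨fun _ h ↦ h.1 rfl⟩

lemma columnGraph_reachable_of_adj {R : SimpleGraph (A × ι)} {x y : A} {a b : ι}
    (h : R.Adj (x, a) (y, b)) : (columnGraph R).Reachable a b := by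
  obtain rfl | hne := eq_or_ne a b
  · rfl
  · exact Adj.reachable ⟨hne, x, y, h⟩

lemma exists_edge_of_columnGraph_adj {R : SimpleGraph (A × ι)} {a b : ι}
    (h : (columnGraph R).Adj a b) : ∃ e ∈ R.edgeSet, e.map Prod.snd = s(a, b) := by
  obtain ⟨-, x, y, hxy⟩ := h
  exact ⟨s((x, a), (y, b)), hxy, rfl⟩

def IsHorizontalShift [Add A] (R : SimpleGraph (A × ι)) (f : ι → A) : Prop :=
  ∀ i j i' j', R.Adj (i, j) (i', j') → i + f j = i' + f j'

namespace ColumnAcyclic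

variable {R : SimpleGraph (A × ι)}

lemma mono {R' : SimpleGraph (A × ι)} (hR : ColumnAcyclic R) (h : R' ≤ R) : ColumnAcyclic R' :=
  fun ⟨k, hk, E, J, hE, hJ, hcyc⟩ ↦
    hR ⟨k, hk, E, J, hE, hJ, fun t ht ↦ ⟨edgeSet_mono h (hcyc t ht).1, (hcyc t ht).2⟩⟩

lemma snd_ne_of_adj (hR : ColumnAcyclic R) {i i' : A} {j j' : ι}
    (h : R.Adj (i, j) (i', j')) : j ≠ j' := by
  rintro rfl
  -- an edge inside a column is a cycle of length one in `R_C`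
  exact hR ⟨1, one_pos, fun _ ↦ s((i, j), (i', j)), fun _ ↦ j,
    by grind, by grind, fun _ _ ↦ ⟨h, rfl⟩⟩

lemma not_reachable_deleteEdges (hR : ColumnAcyclic R) {i i' : A} {j j' : ι}
    (h : R.Adj (i, j) (i', j')) :
    ¬ (columnGraph (R.deleteEdges {s((i, j), (i', j'))})).Reachable j' j := by
  set e := s((i, j), (i', j'))
  -- a path from `j'` to `j` avoiding `e`, closed up by `e`, is a cycle of `R_C`
  intro hreach
  obtain ⟨p, hp⟩ := hreach.exists_isPath
  set m := p.length
  have hm : 0 < m := by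
    rw [pos_iff_ne_zero]
    exact fun h0 ↦ hR.snd_ne_of_adj h (Walk.eq_of_length_eq_zero h0).symm
  have : Nonempty (Sym2 (A × ι)) := ⟨e⟩
  choose! E hE hEcol using fun t (ht : t < m) ↦
    exists_edge_of_columnGraph_adj (p.adj_getVert_succ ht)
  have hEe : ∀ t < m, E t ∈ R.edgeSet ∧ E t ≠ e := fun t ht ↦ by
    simpa [edgeSet_deleteEdges] using hE t ht
  have hJ : Set.InjOn p.getVert {t | t ≤ m} := hp.getVert_injOn
  apply hR
  refine ⟨m + 1, by omega, fun t ↦ if t < m then E t else e, p.getVert, ?_,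
    fun a b ha hb hab ↦ hJ (by simp; omega) (by simp; omega) hab, fun t ht ↦ ?_⟩
  · intro a b ha hb hab
    rcases lt_or_eq_of_le (Nat.lt_succ_iff.1 ha) with ha | rfl <;>
      rcases lt_or_eq_of_le (Nat.lt_succ_iff.1 hb) with hb | rfl <;>
      simp only [ha, hb, if_true, lt_irrefl, if_false] at hab
    · have hcol := hEcol a ha
      rw [hab, hEcol b hb, Sym2.eq_iff] at hcol
      rcases hcol with ⟨h1, -⟩ | ⟨h1, h2⟩
      · exact (hJ (by simp; omega) (by simp; omega) h1).symm
      · have := hJ (by simp; omega) (by simp; omega) h1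
        have := hJ (by simp; omega) (by simp; omega) h2
        omega
    · exact absurd hab (hEe a ha).2
    · exact absurd hab.symm (hEe b hb).2
    · rfl
  · rcases lt_or_eq_of_le (Nat.lt_succ_iff.1 ht) with ht | rfl
    · simp only [ht, if_true, Nat.mod_eq_of_lt (by omega : t + 1 < m + 1)]
      exact ⟨(hEe t ht).1, hEcol t ht⟩
    · simp only [lt_irrefl, if_false, Nat.mod_self]
      exact ⟨h, by simp [e, m]⟩

lemma exists_isHorizontalShift_of_deleteEdges [AddCommGroup A] (hR : ColumnAcyclic R)
    {i i' : A} {j j' : ι} (h : R.Adj (i, j) (i', j')) {f : ι → A}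
    (hf : IsHorizontalShift (R.deleteEdges {s((i, j), (i', j'))}) f) :
    ∃ g, IsHorizontalShift R g := by
  classical
  set R' := R.deleteEdges {s((i, j), (i', j'))}
  set S : ι → Prop := (columnGraph R').Reachable j'
  set d := i + f j - (i' + f j')
  have hj : ¬ S j := hR.not_reachable_deleteEdges h
  have hj' : S j' := Reachable.refl _
  refine ⟨fun b ↦ f b + if S b then d else 0, fun x b y b' hxy ↦ ?_⟩
  by_cases he : s((x, b), (y, b')) = s((i, j), (i', j'))
  · obtain ⟨⟨rfl, rfl⟩, rfl, rfl⟩ | ⟨⟨rfl, rfl⟩, rfl, rfl⟩ := by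
      simpa [Sym2.eq_iff] using he
    all_goals simp only [hj, hj', if_true, if_false, d]; abel
  · have hxy' : R'.Adj (x, b) (y, b') := deleteEdges_adj.2 ⟨hxy, he⟩
    have hbb' := columnGraph_reachable_of_adj hxy'
    have hS : S b ↔ S b' := ⟨fun hb ↦ hb.trans hbb', fun hb' ↦ hb'.trans hbb'.symm⟩
    simp only [hS, ← add_assoc, hf x b y b' hxy']

theorem exists_isHorizontalShift [AddCommGroup A] [Finite A] [Finite ι] (hR : ColumnAcyclic R) :
    ∃ f, IsHorizontalShift R f := by
  induction R using WellFoundedLT.induction with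
  | ind R ih =>
  by_cases hE : ∃ i j i' j', R.Adj (i, j) (i', j')
  · obtain ⟨i, j, i', j', h⟩ := hE
    have hlt : R.deleteEdges {s((i, j), (i', j'))} < R :=
      lt_of_le_of_ne (deleteEdges_le _) (by simpa using h)
    obtain ⟨f, hf⟩ := ih _ hlt (hR.mono (deleteEdges_le _))
    exact hR.exists_isHorizontalShift_of_deleteEdges h hf
  · exact ⟨0, fun i j i' j' h ↦ absurd ⟨i, j, i', j', h⟩ hE⟩

end ColumnAcyclic

theorem stmt5_general {s : ℕ} (R : SimpleGraph (Fin 2 × Fin s))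
    (hforest : ¬ ∃ k > 0, ∃ (E : ℕ → Sym2 (Fin 2 × Fin s)) (J : ℕ → Fin s),
        (∀ a b, a < k → b < k → E a = E b → a = b) ∧
        (∀ a b, a < k → b < k → J a = J b → a = b) ∧
        ∀ t < k, E t ∈ R.edgeSet ∧ (E t).map Prod.snd = s(J t, J ((t + 1) % k))) :
    ∃ U : Finset (Fin s), ∀ i j i' j', R.Adj (i, j) (i', j') →
      (if j ∈ U then i + 1 else i) = (if j' ∈ U then i' + 1 else i') := by
  obtain ⟨f, hf⟩ := ColumnAcyclic.exists_isHorizontalShift hforest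
  have hswap : ∀ i a : Fin 2, (if a = 1 then i + 1 else i) = i + a := by decide
  refine ⟨Finset.univ.filter (f · = 1), fun i j i' j' h ↦ ?_⟩
  simpa only [Finset.mem_filter, Finset.mem_univ, true_and, hswap] using hf i j i' j' h

/-- A 2-row graph has vertex set `Fin 2 × Fin s` (`(i, j)` is the vertex of row `i`
and column `j`), each column being independent.  If the column-contracted multigraph
`R_C` (vertices = columns, edges = edges of `R`) is a forest — i.e. there is no
closed sequence of `k ≥ 1` pairwise distinct edges through `k` pairwise distinct
columns — then there is a set `U` of columns such that after swapping the two
vertices within each column of `U`, no edge joins the first row to the second row. -/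
theorem stmt5 {s : ℕ} (R : SimpleGraph (Fin 2 × Fin s))
    (hcol : ∀ i i' j, ¬ R.Adj (i, j) (i', j))
    (hforest : ¬ ∃ k > 0, ∃ (E : ℕ → Sym2 (Fin 2 × Fin s)) (J : ℕ → Fin s),
        (∀ a b, a < k → b < k → E a = E b → a = b) ∧
        (∀ a b, a < k → b < k → J a = J b → a = b) ∧
        ∀ t < k, E t ∈ R.edgeSet ∧ (E t).map Prod.snd = s(J t, J ((t + 1) % k))) :
    ∃ U : Finset (Fin s), ∀ i j i' j', R.Adj (i, j) (i', j') →
      (if j ∈ U then i + 1 else i) = (if j' ∈ U then i' + 1 else i') :=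
  stmt5_general R hforest
end

section
/- Let R be a 3-row graph with s columns such that R_C is eulerian, and suppose the subgraph R[V_1] induced by the first row V_1 = {v_{1j} : 1 ≤ j ≤ s} is connected. Then R has an amiable coloring. -/
/-! A 3-row graph with `s` columns is a simple graph on `Fin 3 × Fin s`
(vertex `(i, j)` lies in row `i` and column `j`) whose columns are independent. -/

/-- Every column is an independent set. -/
def ColIndep {s : ℕ} (R : SimpleGraph (Fin 3 × Fin s)) : Prop :=
  ∀ i i' j, ¬ R.Adj (i, j) (i', j)

/-- `d_c(v, R)`: the number of edges of color `c` (under the edge coloring `g`)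
incident with `v`. -/
noncomputable def dColor {s : ℕ} (R : SimpleGraph (Fin 3 × Fin s))
    (g : Sym2 (Fin 3 × Fin s) → Fin 3) (c : Fin 3) (v : Fin 3 × Fin s) : ℕ :=
  {w | R.Adj v w ∧ g s(v, w) = c}.ncard

/-- An amiable coloring of a 3-row graph: a vertex 3-coloring `f` and an edge
3-coloring `g` such that (i) `f` is injective on every column, (ii) no edge has
the color of one of its endpoints, (iii) for every color `c` and column `j`,
`d_c(v₀ⱼ) + d_c(v₁ⱼ) + d_c(v₂ⱼ)` is even. -/
def Amiable {s : ℕ} (R : SimpleGraph (Fin 3 × Fin s))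
    (f : Fin 3 × Fin s → Fin 3) (g : Sym2 (Fin 3 × Fin s) → Fin 3) : Prop :=
  (∀ j, Function.Injective (fun i : Fin 3 => f (i, j))) ∧
  (∀ v w, R.Adj v w → f v ≠ g s(v, w)) ∧
  (∀ c : Fin 3, ∀ j,
    Even (dColor R g c (0, j) + dColor R g c (1, j) + dColor R g c (2, j)))

/-- `R_C` (the multigraph obtained by identifying each column to one vertex) is
eulerian: the degree of each column, i.e. the sum of the degrees of its three
vertices (columns being independent), is even. -/
def EulerianRC {s : ℕ} (R : SimpleGraph (Fin 3 × Fin s)) : Prop :=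
  ∀ j, Even ((R.neighborSet (0, j)).ncard + (R.neighborSet (1, j)).ncard +
    (R.neighborSet (2, j)).ncard)

/-- The `i`-th row. -/
def rowSet (s : ℕ) (i : Fin 3) : Set (Fin 3 × Fin s) := {v | v.1 = i}


/-!
Color row 0 with 0 and, in column `j`, rows 1 and 2 with 1 and 2 in an order given by a bit
`ε j`. An edge whose ends have distinct colors is forced to take the third one; an edge with
both ends of color `c` may take either other color, and a bit on the edge chooses. Everything is
counted mod 2 through column boundaries, i.e. the parity of the number of edge ends in a column.

Color 0 then consists of the lower edges minus the monochromatic lower edges whose bit is set, so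
we need monochromatic lower edges with the same column boundary as all lower edges together.
Take a rooted spanning forest of the graph that the lower edges induce on the columns, realise
each forest edge by a lower edge, and choose `ε` along the forest so that these are
monochromatic. By the handshake lemma the column boundary of the lower edges sums to zero on every
component, so it is the boundary of a sum of forest paths to the roots. Color 2 is corrected in
the same way by edges of row 0, whose column graph is connected, and color 1 follows because
`R_C` is eulerian.
-/

open Finset

namespace SimpleGraph

section Boundary

variable {V : Type*} [Fintype V] (G : SimpleGraph V)

open scoped Classical in
noncomputable def chainBoundary : (Sym2 V → ZMod 2) →ₗ[ZMod 2] (V → ZMod 2) where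
  toFun m v := ∑ w, if G.Adj v w then m s(v, w) else 0
  map_add' m m' := by ext v; simp [← sum_add_distrib, ite_add_ite]
  map_smul' c m := by ext v; simp [mul_sum]

open scoped Classical in
theorem chainBoundary_apply (m : Sym2 V → ZMod 2) (v : V) :
    G.chainBoundary m v = ∑ w, if G.Adj v w then m s(v, w) else 0 := rfl

theorem chainBoundary_congr {m m' : Sym2 V → ZMod 2}
    (h : ∀ v w, G.Adj v w → m s(v, w) = m' s(v, w)) : G.chainBoundary m = G.chainBoundary m' := by
  ext v
  simp only [chainBoundary_apply]
  exact sum_congr rfl fun w _ => by split_ifs with hvw <;> simp [h v w, hvw]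

theorem chainBoundary_single [DecidableEq V] {u w : V} (h : G.Adj u w) :
    G.chainBoundary (Pi.single s(u, w) 1) = Pi.single u 1 + Pi.single w 1 := by
  ext v
  have hsingle : ∀ x, Pi.single (M := fun _ => ZMod 2) s(u, w) 1 s(v, x) =
      if (v = u ∧ x = w) ∨ (v = w ∧ x = u) then 1 else 0 := fun x => by
    simp only [Pi.single_apply, Sym2.eq_iff]
  simp only [chainBoundary_apply, hsingle, Pi.add_apply, Pi.single_apply]
  rcases eq_or_ne v u with rfl | hu
  · rw [sum_eq_single w (fun x _ hx => by simp [hx, h.ne]) (by simp)]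
    simp [h, h.ne]
  · rcases eq_or_ne v w with rfl | hw
    · rw [sum_eq_single u (fun x _ hx => by simp [hx, hu]) (by simp)]
      simp [h.symm, hu]
    · simp [hu, hw]

theorem natCast_ncard_eq_chainBoundary (P : Sym2 V → Prop) [DecidablePred P] (v : V) :
    (({w | G.Adj v w ∧ P s(v, w)}.ncard : ℕ) : ZMod 2) =
      G.chainBoundary (fun e => if P e then 1 else 0) v := by
  classical
  rw [Set.ncard_eq_toFinset_card', Set.toFinset_ofPred, card_filter, chainBoundary_apply]
  push_cast
  exact sum_congr rfl fun w _ => by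
    by_cases h1 : G.Adj v w <;> by_cases h2 : P s(v, w) <;> simp [h1, h2]

theorem natCast_ncard_neighborSet (v : V) :
    (((G.neighborSet v).ncard : ℕ) : ZMod 2) = G.chainBoundary 1 v := by
  have h := G.natCast_ncard_eq_chainBoundary (fun _ => True) v
  simp only [and_true, ite_true] at h
  exact h

theorem sum_chainBoundary_eq_zero_of_closed (m : Sym2 V → ZMod 2) (S : Finset V)
    (hS : ∀ v w, G.Adj v w → m s(v, w) ≠ 0 → v ∈ S → w ∈ S) :
    ∑ v ∈ S, G.chainBoundary m v = 0 := by
  classical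
  have hrestrict : ∀ v ∈ S,
      G.chainBoundary m v = ∑ w ∈ S, if G.Adj v w then m s(v, w) else 0 := by
    intro v hv
    rw [chainBoundary_apply]
    refine (sum_subset (subset_univ S) fun w _ hw => ?_).symm
    split_ifs with hvw
    · by_contra hm
      exact hw (hS v w hvw hm hv)
    · rfl
  rw [sum_congr rfl hrestrict, ← sum_product']
  refine sum_involution (fun x _ => x.swap) (fun x _ => ?_) (fun x _ hx hswap => ?_)
    (fun x hx => by simpa [and_comm] using hx) (fun x _ => x.swap_swap)
  · simp only [Prod.fst_swap, Prod.snd_swap, G.adj_comm x.2, Sym2.eq_swap (a := x.2)]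
    exact CharTwo.add_self_eq_zero _
  · obtain ⟨v, w⟩ := x
    obtain rfl : w = v := congrArg Prod.fst hswap
    simp at hx

end Boundary

variable {C : Type*}

theorem Reachable.exists_adj_dist_lt {G : SimpleGraph C} {u v : C} (h : G.Reachable u v)
    (hne : u ≠ v) : ∃ w, G.Adj u w ∧ G.dist w v < G.dist u v := by
  obtain ⟨p, hp⟩ := h.exists_walk_length_eq_dist
  cases p with
  | nil => exact absurd rfl hne
  | cons hadj q =>
    refine ⟨_, hadj, ?_⟩
    have := dist_le q
    simp only [Walk.length_cons] at hp
    omega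

/-- A spanning forest of `G`, given by a parent map whose iterates stabilise, after `height`
steps, at one root per connected component. -/
structure RootedForest (G : SimpleGraph C) where
  parent : C → C
  height : ℕ
  adj_parent : ∀ x, parent x ≠ x → G.Adj x (parent x)
  parent_iterate_height : ∀ x, parent (parent^[height] x) = parent^[height] x
  iterate_height_eq : ∀ {x y}, G.Reachable x y → parent^[height] x = parent^[height] y

theorem nonempty_rootedForest [Fintype C] (G : SimpleGraph C) : Nonempty G.RootedForest := by
  classical
  let ρ : C → C := fun x => (G.connectedComponentMk x).out
  have reach_ρ : ∀ x, G.Reachable x (ρ x) := fun x =>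
    (ConnectedComponent.eq.mp (G.connectedComponentMk x).out_eq).symm
  have ρ_eq : ∀ {x y}, G.Reachable x y → ρ x = ρ y := fun h => by
    simp only [ρ, ConnectedComponent.eq.mpr h]
  have step : ∀ x, x ≠ ρ x → ∃ y, G.Adj x y ∧ G.dist y (ρ x) < G.dist x (ρ x) :=
    fun x hx => (reach_ρ x).exists_adj_dist_lt hx
  choose! next hnext using step
  let p : C → C := fun x => if x = ρ x then x else next x
  have hp_root : ∀ x, x = ρ x → p x = x := fun x hx => if_pos hx
  have hp_step : ∀ x, x ≠ ρ x → G.Adj x (p x) ∧ G.dist (p x) (ρ x) < G.dist x (ρ x) :=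
    fun x hx => by simpa only [p, if_neg hx] using hnext x hx
  have iterate_eq : ∀ n x, G.dist x (ρ x) ≤ n → p^[n] x = ρ x := by
    intro n
    induction n with
    | zero => exact fun x hx => (reach_ρ x).dist_eq_zero_iff.mp (Nat.le_zero.mp hx)
    | succ n ih =>
      intro x hx
      by_cases hxρ : x = ρ x
      · rw [Function.iterate_fixed (hp_root x hxρ), ← hxρ]
      · obtain ⟨hadj, hlt⟩ := hp_step x hxρ
        have hρ : ρ (p x) = ρ x := (ρ_eq hadj.reachable).symm
        rw [Function.iterate_succ_apply, ih (p x) (by rw [hρ]; omega), hρ]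
  let N := univ.sup fun x => G.dist x (ρ x)
  have hN : ∀ x, p^[N] x = ρ x := fun x =>
    iterate_eq N x (le_sup (f := fun x => G.dist x (ρ x)) (mem_univ x))
  refine ⟨⟨p, N, fun x hx => (hp_step x fun h => hx (hp_root x h)).1, fun x => ?_, fun h => ?_⟩⟩
  · rw [hN]
    exact hp_root _ (ρ_eq (reach_ρ x))
  · rw [hN, hN, ρ_eq h]

namespace RootedForest

variable {G : SimpleGraph C} (T : G.RootedForest)

def root (x : C) : C := T.parent^[T.height] x

theorem parent_root (x : C) : T.parent (T.root x) = T.root x := T.parent_iterate_height x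

theorem root_eq_of_reachable {x y : C} (h : G.Reachable x y) : T.root x = T.root y :=
  T.iterate_height_eq h

theorem exists_potential (t : C → ZMod 2) :
    ∃ ε : C → ZMod 2, ∀ x, T.parent x ≠ x → ε x = ε (T.parent x) + t x := by
  classical
  let t' : C → ZMod 2 := fun x => if T.parent x = x then 0 else t x
  refine ⟨fun x => ∑ k ∈ range T.height, t' (T.parent^[k] x), fun x hx => ?_⟩
  have htel := sum_range_sub' (fun k => t' (T.parent^[k] x)) T.height
  simp only [Function.iterate_succ_apply, sum_sub_distrib] at htel
  have hroot : t' (T.root x) = 0 := if_pos (T.parent_root x)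
  have hx' : t' x = t x := if_neg hx
  simp only [root] at hroot
  simp only [Function.iterate_zero_apply, hroot, hx'] at htel
  linear_combination htel

/-- The preimage is `∑ x, q x • (path from x to its root)`: the image of such a path telescopes
to `single x 1 - single (root x) 1`, and the second terms cancel root by root. -/
theorem exists_map_eq [Fintype C] [DecidableEq C] {α : Type*}
    (d : (α → ZMod 2) →ₗ[ZMod 2] (C → ZMod 2)) (e : C → α → ZMod 2)
    (he : ∀ x, T.parent x ≠ x → d (e x) = Pi.single x 1 + Pi.single (T.parent x) 1)
    (q : C → ZMod 2) (hq : ∀ y, ∑ x with T.root x = y, q x = 0) :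
    ∃ m, d m = q ∧ ∀ a, m a ≠ 0 → ∃ x, T.parent x ≠ x ∧ e x a ≠ 0 := by
  let e' : C → α → ZMod 2 := fun x => if T.parent x = x then 0 else e x
  have he' : ∀ x, d (e' x) = Pi.single x 1 - Pi.single (T.parent x) 1 := by
    intro x
    by_cases hx : T.parent x = x
    · simp [e', hx]
    · ext y
      simp [e', hx, he, ZMod.neg_eq_self_mod_two, sub_eq_add_neg]
  let path : C → α → ZMod 2 := fun x => ∑ k ∈ range T.height, e' (T.parent^[k] x)
  have hpath : ∀ x, d (path x) = Pi.single x 1 - Pi.single (T.root x) 1 := by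
    intro x
    simp only [path, map_sum, he', ← Function.iterate_succ_apply' T.parent]
    exact sum_range_sub' (fun k => Pi.single (M := fun _ => ZMod 2) (T.parent^[k] x) 1) T.height
  refine ⟨∑ x, q x • path x, ?_, fun a ha => ?_⟩
  · ext y
    simp only [map_sum, map_smul, hpath, Finset.sum_apply, Pi.smul_apply, Pi.sub_apply,
      Pi.single_apply, eq_comm (a := y), smul_eq_mul, mul_sub, mul_ite, mul_one, mul_zero,
      sum_sub_distrib, sum_ite_eq', mem_univ, ↓reduceIte, sub_eq_self]
    rw [← sum_filter]
    exact hq y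
  · obtain ⟨x, -, hx⟩ := exists_ne_zero_of_sum_ne_zero (by simpa using ha)
    have hx' : ∑ k ∈ range T.height, e' (T.parent^[k] x) a ≠ 0 := by
      simpa [path, Finset.sum_apply] using right_ne_zero_of_mul hx
    obtain ⟨k, -, hk⟩ := exists_ne_zero_of_sum_ne_zero hx'
    by_cases hroot : T.parent (T.parent^[k] x) = T.parent^[k] x
    · simp [e', hroot] at hk
    · exact ⟨_, hroot, by simpa [e', hroot] using hk⟩

end RootedForest

end SimpleGraph

open SimpleGraph

section Columns

variable {ι C : Type*} [Fintype ι]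

def colSum : (ι × C → ZMod 2) →ₗ[ZMod 2] (C → ZMod 2) where
  toFun F j := ∑ i, F (i, j)
  map_add' F F' := by ext j; simp [sum_add_distrib]
  map_smul' c F := by ext j; simp [mul_sum]

theorem colSum_apply (F : ι × C → ZMod 2) (j : C) : colSum F j = ∑ i, F (i, j) := rfl

theorem colSum_single [DecidableEq ι] [DecidableEq C] (v : ι × C) :
    colSum (Pi.single v 1) = Pi.single v.2 1 := by
  ext j
  by_cases hj : v.2 = j <;> simp [colSum_apply, Pi.single_apply, Prod.ext_iff, hj, eq_comm (a := j)]

variable [Fintype C]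

theorem sum_colSum [DecidableEq C] (K : Finset C) (F : ι × C → ZMod 2) :
    ∑ j ∈ K, colSum F j = ∑ v with v.2 ∈ K, F v := by
  rw [show ({v | v.2 ∈ K} : Finset (ι × C)) = univ ×ˢ K by ext; simp, sum_product_right]
  rfl

noncomputable def colBoundary (R : SimpleGraph (ι × C)) :
    (Sym2 (ι × C) → ZMod 2) →ₗ[ZMod 2] (C → ZMod 2) :=
  colSum ∘ₗ R.chainBoundary

theorem colBoundary_congr {R : SimpleGraph (ι × C)} {m m' : Sym2 (ι × C) → ZMod 2}
    (h : ∀ v w, R.Adj v w → m s(v, w) = m' s(v, w)) : colBoundary R m = colBoundary R m' := by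
  rw [colBoundary, LinearMap.comp_apply, LinearMap.comp_apply, R.chainBoundary_congr h]

end Columns

section ColumnGraph

variable {ι C : Type*}

def colGraph (R : SimpleGraph (ι × C)) (I : Set ι) : SimpleGraph C :=
  SimpleGraph.fromRel fun j k => ∃ i ∈ I, ∃ i' ∈ I, R.Adj (i, j) (i', k)

open scoped Classical in
noncomputable def rowIndicator (I : Set ι) (e : Sym2 (ι × C)) : ZMod 2 :=
  if ∀ v ∈ e, v.1 ∈ I then 1 else 0

variable {R : SimpleGraph (ι × C)} {I : Set ι}

theorem colGraph_adj {i i' : ι} {j k : C} (h : R.Adj (i, j) (i', k)) (hi : i ∈ I) (hi' : i' ∈ I)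
    (hjk : j ≠ k) : (colGraph R I).Adj j k :=
  ⟨hjk, Or.inl ⟨i, hi, i', hi', h⟩⟩

theorem exists_adj_of_colGraph_adj {j k : C} (h : (colGraph R I).Adj j k) :
    ∃ i ∈ I, ∃ i' ∈ I, R.Adj (i, j) (i', k) := by
  obtain ⟨-, h | ⟨i, hi, i', hi', h⟩⟩ := h
  · exact h
  · exact ⟨i', hi', i, hi, h.symm⟩

theorem colGraph_connected_of_induce {i₀ : ι} (h : (R.induce {v | v.1 = i₀}).Connected) :
    (colGraph R {i₀}).Connected := by
  let φ : R.induce {v | v.1 = i₀} →g colGraph R {i₀} :=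
    ⟨fun v => v.1.2, fun {v w} hvw => colGraph_adj hvw v.2 w.2 fun hvw2 =>
      hvw.ne (Subtype.ext (Prod.ext (v.2.trans w.2.symm) hvw2))⟩
  exact h.map φ fun j => ⟨⟨(i₀, j), rfl⟩, rfl⟩

theorem SimpleGraph.RootedForest.exists_realizing_rows [Nonempty ι]
    (T : (colGraph R I).RootedForest) :
    ∃ a b : C → ι, ∀ x, T.parent x ≠ x → a x ∈ I ∧ b x ∈ I ∧ R.Adj (a x, x) (b x, T.parent x) := by
  have h : ∀ x, ∃ ab : ι × ι, T.parent x ≠ x →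
      ab.1 ∈ I ∧ ab.2 ∈ I ∧ R.Adj (ab.1, x) (ab.2, T.parent x) := fun x => by
    by_cases hx : T.parent x = x
    · exact ⟨Classical.arbitrary _, fun h => absurd hx h⟩
    · obtain ⟨i, hi, i', hi', hadj⟩ := exists_adj_of_colGraph_adj (T.adj_parent x hx)
      exact ⟨(i, i'), fun _ => ⟨hi, hi', hadj⟩⟩
  choose ab hab using h
  exact ⟨fun x => (ab x).1, fun x => (ab x).2, hab⟩

variable [Fintype ι] [Fintype C] [DecidableEq C]

theorem sum_colBoundary_eq_zero_of_closed (m : Sym2 (ι × C) → ZMod 2)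
    (hm : ∀ v w, R.Adj v w → m s(v, w) ≠ 0 → v.1 ∈ I ∧ w.1 ∈ I) (K : Finset C)
    (hK : ∀ j k, (colGraph R I).Adj j k → j ∈ K → k ∈ K) :
    ∑ j ∈ K, colBoundary R m j = 0 := by
  refine (sum_colSum K _).trans
    (R.sum_chainBoundary_eq_zero_of_closed m _ fun v w hvw hmvw hv => ?_)
  simp only [mem_filter, mem_univ, true_and] at hv ⊢
  obtain ⟨hvI, hwI⟩ := hm v w hvw hmvw
  by_cases hvw2 : v.2 = w.2
  · exact hvw2 ▸ hv
  · exact hK _ _ (colGraph_adj hvw hvI hwI hvw2) hv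

theorem sum_colBoundary_rowIndicator_eq_zero (T : (colGraph R I).RootedForest) (y : C) :
    ∑ x with T.root x = y, colBoundary R (rowIndicator I) x = 0 :=
  sum_colBoundary_eq_zero_of_closed _
    (fun v w _ h => by simpa [rowIndicator, Sym2.forall_mem_pair] using h) _
    fun j k hjk hj => by simpa [← T.root_eq_of_reachable hjk.reachable] using hj

theorem SimpleGraph.RootedForest.exists_colBoundary_eq {G : SimpleGraph C}
    (T : G.RootedForest) (a b : C → ι)
    (hab : ∀ x, T.parent x ≠ x → R.Adj (a x, x) (b x, T.parent x))
    (q : C → ZMod 2) (hq : ∀ y, ∑ x with T.root x = y, q x = 0) :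
    ∃ m, colBoundary R m = q ∧
      ∀ e, m e ≠ 0 → ∃ x, T.parent x ≠ x ∧ e = s((a x, x), (b x, T.parent x)) := by
  classical
  obtain ⟨m, hm, hsupp⟩ := T.exists_map_eq (colBoundary R)
    (fun x => Pi.single s((a x, x), (b x, T.parent x)) 1)
    (fun x hx => by
      rw [colBoundary, LinearMap.comp_apply, R.chainBoundary_single (hab x hx), map_add,
        colSum_single, colSum_single]) q hq
  refine ⟨m, hm, fun e he => ?_⟩
  obtain ⟨x, hx, hex⟩ := hsupp e he
  exact ⟨x, hx, by simpa [Pi.single_apply] using hex⟩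

theorem exists_colBoundary_eq_of_connected {i₀ : ι}
    (hconn : (colGraph R {i₀}).Connected) (τ : Sym2 (ι × C) → ZMod 2) :
    ∃ m, colBoundary R m = colBoundary R τ ∧
      ∀ v w, R.Adj v w → m s(v, w) ≠ 0 → v.1 = i₀ ∧ w.1 = i₀ := by
  have : Nonempty ι := ⟨i₀⟩
  obtain ⟨T⟩ := (colGraph R {i₀}).nonempty_rootedForest
  obtain ⟨a, b, hab⟩ := T.exists_realizing_rows
  have hq : ∀ y, ∑ x with T.root x = y, colBoundary R τ x = 0 := fun y =>
    sum_colBoundary_eq_zero_of_closed (I := Set.univ) τ (by simp) _ fun j k _ hj => by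
      simpa [T.root_eq_of_reachable (hconn.preconnected k j)] using hj
  obtain ⟨m, hm, hsupp⟩ := T.exists_colBoundary_eq a b (fun x hx => (hab x hx).2.2) _ hq
  refine ⟨m, hm, fun v w _ hm0 => ?_⟩
  obtain ⟨x, hx, hvw⟩ := hsupp _ hm0
  obtain ⟨ha, hb, -⟩ := hab x hx
  rcases Sym2.eq_iff.mp hvw with ⟨rfl, rfl⟩ | ⟨rfl, rfl⟩
  · exact ⟨ha, hb⟩
  · exact ⟨hb, ha⟩

end ColumnGraph

section Coloring

def colSwap (b : ZMod 2) : Equiv.Perm (Fin 3) := if b = 0 then 1 else Equiv.swap 1 2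

theorem colSwap_eq_zero_iff {b : ZMod 2} {i : Fin 3} : colSwap b i = 0 ↔ i = 0 := by
  revert b i; decide

theorem colSwap_eq_colSwap {b b' : ZMod 2} {i i' : Fin 3} (hi : i ≠ 0) (hi' : i' ≠ 0)
    (h : b = b' + if i = i' then 0 else 1) : colSwap b i = colSwap b' i' := by
  revert b b' i i'; decide

/-- For `c ≠ d`, `-(c + d)` is the third color since `0 + 1 + 2 = 0` in `Fin 3`; for `c = d` the
bit `b` chooses one of the two other colors. -/
def avoidColor (c d : Fin 3) (b : ZMod 2) : Fin 3 :=
  if c = d then (if b = 0 then (if c = 0 then 1 else 0) else (if c = 2 then 1 else 2))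
  else -(c + d)

theorem avoidColor_comm (c d : Fin 3) (b : ZMod 2) : avoidColor c d b = avoidColor d c b := by
  revert c d b; decide

theorem avoidColor_ne_left (c d : Fin 3) (b : ZMod 2) : avoidColor c d b ≠ c := by
  revert c d b; decide

theorem indicator_avoidColor_eq_zero {c d : Fin 3} {b b' : ZMod 2}
    (hb : b ≠ 0 → c = d ∧ c ≠ 0) (hb' : b' ≠ 0 → c = 0 ∧ d = 0) :
    (if avoidColor c d (b + b') = 0 then 1 else 0 : ZMod 2) =
      (if c ≠ 0 ∧ d ≠ 0 then 1 else 0) + b := by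
  revert c d b b'; decide

theorem indicator_avoidColor_eq_two {c d : Fin 3} {b b' : ZMod 2}
    (hb : b ≠ 0 → c = d ∧ c ≠ 0) (hb' : b' ≠ 0 → c = 0 ∧ d = 0) :
    (if avoidColor c d (b + b') = 2 then 1 else 0 : ZMod 2) =
      (if avoidColor c d b = 2 then 1 else 0) + b' := by
  revert c d b b'; decide

theorem indicator_eq_one_fin3 (c : Fin 3) :
    (if c = 1 then 1 else 0 : ZMod 2) =
      1 + (if c = 0 then 1 else 0) + (if c = 2 then 1 else 0) := by
  revert c; decide

variable {V : Type*}

def edgeColoring (f : V → Fin 3) (β : Sym2 V → ZMod 2) : Sym2 V → Fin 3 :=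
  Sym2.lift ⟨fun v w => avoidColor (f v) (f w) (β s(v, w)), fun v w => by
    dsimp only
    rw [avoidColor_comm, Sym2.eq_swap]⟩

theorem edgeColoring_mk (f : V → Fin 3) (β : Sym2 V → ZMod 2) (v w : V) :
    edgeColoring f β s(v, w) = avoidColor (f v) (f w) (β s(v, w)) := rfl

end Coloring

section ThreeRows

variable {C : Type*} [Fintype C]

theorem exists_monochromatic_lower_chain [DecidableEq C] (R : SimpleGraph (Fin 3 × C)) :
    ∃ (ε : C → ZMod 2) (m : Sym2 (Fin 3 × C) → ZMod 2),
      colBoundary R m = colBoundary R (rowIndicator {0}ᶜ) ∧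
      ∀ v w, R.Adj v w → m s(v, w) ≠ 0 → colSwap (ε v.2) v.1 = colSwap (ε w.2) w.1 ∧ v.1 ≠ 0 := by
  obtain ⟨T⟩ := (colGraph R {0}ᶜ).nonempty_rootedForest
  obtain ⟨a, b, hab⟩ := T.exists_realizing_rows
  obtain ⟨ε, hε⟩ := T.exists_potential fun x => if a x = b x then 0 else 1
  obtain ⟨m, hm, hsupp⟩ := T.exists_colBoundary_eq a b (fun x hx => (hab x hx).2.2) _
    (sum_colBoundary_rowIndicator_eq_zero T)
  refine ⟨ε, m, hm, fun v w _ hm0 => ?_⟩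
  obtain ⟨x, hx, hvw⟩ := hsupp _ hm0
  obtain ⟨ha, hb, -⟩ := hab x hx
  have hmono := colSwap_eq_colSwap ha hb (hε x hx)
  rcases Sym2.eq_iff.mp hvw with ⟨rfl, rfl⟩ | ⟨rfl, rfl⟩
  · exact ⟨hmono, ha⟩
  · exact ⟨hmono.symm, hb⟩

theorem colBoundary_edgeColoring_eq_zero {R : SimpleGraph (Fin 3 × C)}
    (hR : colBoundary R 1 = 0) {f : Fin 3 × C → Fin 3} (hf : ∀ v, f v = 0 ↔ v.1 = 0)
    {mM mS : Sym2 (Fin 3 × C) → ZMod 2}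
    (hM : colBoundary R mM = colBoundary R (rowIndicator {0}ᶜ))
    (hM_supp : ∀ v w, R.Adj v w → mM s(v, w) ≠ 0 → f v = f w ∧ v.1 ≠ 0)
    (hS : colBoundary R mS = colBoundary R fun e => if edgeColoring f mM e = 2 then 1 else 0)
    (hS_supp : ∀ v w, R.Adj v w → mS s(v, w) ≠ 0 → v.1 = 0 ∧ w.1 = 0) (c : Fin 3) :
    colBoundary R (fun e => if edgeColoring f (mM + mS) e = c then 1 else 0) = 0 := by
  have hM_supp' : ∀ v w, R.Adj v w → mM s(v, w) ≠ 0 → f v = f w ∧ f v ≠ 0 := by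
    simpa only [ne_eq, hf] using hM_supp
  have hS_supp' : ∀ v w, R.Adj v w → mS s(v, w) ≠ 0 → f v = 0 ∧ f w = 0 := by
    simpa only [hf] using hS_supp
  have h0 : colBoundary R (fun e => if edgeColoring f (mM + mS) e = 0 then 1 else 0) =
      colBoundary R (rowIndicator {0}ᶜ) + colBoundary R mM := by
    rw [← map_add]
    refine colBoundary_congr fun v w hvw => ?_
    rw [edgeColoring_mk, Pi.add_apply, Pi.add_apply,
      indicator_avoidColor_eq_zero (hM_supp' v w hvw) (hS_supp' v w hvw)]
    simp [rowIndicator, hf]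
  have h2 : colBoundary R (fun e => if edgeColoring f (mM + mS) e = 2 then 1 else 0) =
      colBoundary R (fun e => if edgeColoring f mM e = 2 then 1 else 0) + colBoundary R mS := by
    rw [← map_add]
    refine colBoundary_congr fun v w hvw => ?_
    rw [edgeColoring_mk, Pi.add_apply, Pi.add_apply,
      indicator_avoidColor_eq_two (hM_supp' v w hvw) (hS_supp' v w hvw), edgeColoring_mk]
  have h1 : colBoundary R (fun e => if edgeColoring f (mM + mS) e = 1 then 1 else 0) =
      colBoundary R 1 + colBoundary R (fun e => if edgeColoring f (mM + mS) e = 0 then 1 else 0) +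
        colBoundary R (fun e => if edgeColoring f (mM + mS) e = 2 then 1 else 0) := by
    rw [← map_add, ← map_add]
    exact congrArg _ (funext fun e => indicator_eq_one_fin3 _)
  have hadd : ∀ F : C → ZMod 2, F + F = 0 := fun F => funext fun _ => CharTwo.add_self_eq_zero _
  match c with
  | 0 => rw [h0, hM, hadd]
  | 1 => rw [h1, h0, h2, hM, hS, hR]; simp only [hadd]
  | 2 => rw [h2, hS, hadd]

end ThreeRows

theorem EulerianRC.colBoundary_one_eq_zero {s : ℕ} {R : SimpleGraph (Fin 3 × Fin s)}
    (h : EulerianRC R) : colBoundary R 1 = 0 := by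
  ext j
  have hj := (ZMod.natCast_eq_zero_iff_even).mpr (h j)
  push_cast at hj
  simpa [colBoundary, colSum_apply, Fin.sum_univ_three, natCast_ncard_neighborSet] using hj

theorem natCast_dColor {s : ℕ} (R : SimpleGraph (Fin 3 × Fin s))
    (g : Sym2 (Fin 3 × Fin s) → Fin 3) (c : Fin 3) (v : Fin 3 × Fin s) :
    (dColor R g c v : ZMod 2) = R.chainBoundary (fun e => if g e = c then 1 else 0) v :=
  R.natCast_ncard_eq_chainBoundary (fun e => g e = c) v

theorem even_dColor_iff {s : ℕ} (R : SimpleGraph (Fin 3 × Fin s))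
    (g : Sym2 (Fin 3 × Fin s) → Fin 3) (c : Fin 3) (j : Fin s) :
    Even (dColor R g c (0, j) + dColor R g c (1, j) + dColor R g c (2, j)) ↔
      colBoundary R (fun e => if g e = c then 1 else 0) j = 0 := by
  rw [← ZMod.natCast_eq_zero_iff_even]
  push_cast
  simp [natCast_dColor, colBoundary, colSum_apply, Fin.sum_univ_three]

theorem stmt8_general {s : ℕ} (R : SimpleGraph (Fin 3 × Fin s))
    (heul : EulerianRC R)
    (hconn : (R.induce (rowSet s 0)).Connected) :
    ∃ (f : Fin 3 × Fin s → Fin 3) (g : Sym2 (Fin 3 × Fin s) → Fin 3),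
      Amiable R f g := by
  obtain ⟨ε, mM, hM, hM_supp⟩ := exists_monochromatic_lower_chain R
  let f : Fin 3 × Fin s → Fin 3 := fun v => colSwap (ε v.2) v.1
  have hf : ∀ v, f v = 0 ↔ v.1 = 0 := fun v => colSwap_eq_zero_iff
  obtain ⟨mS, hS, hS_supp⟩ := exists_colBoundary_eq_of_connected
    (colGraph_connected_of_induce hconn) fun e => if edgeColoring f mM e = 2 then 1 else 0
  refine ⟨f, edgeColoring f (mM + mS), fun j => (colSwap (ε j)).injective,
    fun v w _ => (avoidColor_ne_left _ _ _).symm, fun c j => (even_dColor_iff R _ c j).mpr ?_⟩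
  exact congrFun (colBoundary_edgeColoring_eq_zero heul.colBoundary_one_eq_zero hf hM hM_supp hS
    hS_supp c) j

/-- If `R_C` is eulerian and the subgraph induced by the first row is connected,
then `R` has an amiable coloring. -/
theorem stmt8 {s : ℕ} (R : SimpleGraph (Fin 3 × Fin s))
    (hcol : ColIndep R) (heul : EulerianRC R)
    (hconn : (R.induce (rowSet s 0)).Connected) :
    ∃ (f : Fin 3 × Fin s → Fin 3) (g : Sym2 (Fin 3 × Fin s) → Fin 3),
      Amiable R f g :=
  stmt8_general R heul hconn
end

section
/- Let R be a 3-row graph with R_C eulerian. Suppose that for some i ∈ {1,2,3}, at most one connected component of R[V_i] has more than one vertex, and that every column of R containing an isolated vertex of R[V_i] contains at most one vertex of positive degree in R. Then R has an amiable coloring. -/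
namespace AmiableTK
open Finset
open scoped Classical

set_option linter.unusedSectionVars false

variable {V : Type*} [Fintype V] [DecidableEq V] {J : Type*} [Fintype J] [DecidableEq J]
variable (col : V → J)

/-- number of ends of `S` (a symmetric set of ordered pairs) whose first coordinate
lies in column `j`. -/
noncomputable def pdeg (S : Finset (V × V)) (j : J) : ℕ :=
  (S.filter fun z => col z.1 = j).card

def Symm (S : Finset (V × V)) : Prop := ∀ z ∈ S, Prod.swap z ∈ S
def Cross (S : Finset (V × V)) : Prop := ∀ z ∈ S, col z.1 ≠ col z.2

lemma even_iff_cast (n : ℕ) : Even n ↔ (n : ZMod 2) = 0 := by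
  rw [ZMod.natCast_eq_zero_iff]
  exact even_iff_two_dvd

lemma sum_pdeg (S : Finset (V × V)) : ∑ j : J, pdeg col S j = S.card := by
  unfold pdeg
  exact (Finset.card_eq_sum_card_fiberwise (fun z _ => Finset.mem_univ (col z.1))).symm

lemma symm_mem_swap {S : Finset (V × V)} (hs : Symm S) {z : V × V} (h : Prod.swap z ∈ S) :
    z ∈ S := by
  have := hs _ h; simpa using this

lemma even_card_of_symm (S : Finset (V × V)) (hs : Symm S)
    (hc : ∀ z ∈ S, z.1 ≠ z.2) : Even S.card := by
  induction S using Finset.strongInductionOn with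
  | _ S ih =>
    rcases S.eq_empty_or_nonempty with rfl | ⟨z, hz⟩
    · simp
    · have hzs : Prod.swap z ∈ S := hs _ hz
      have hne : z ≠ Prod.swap z := by
        intro h
        have := hc z hz
        apply this
        have : z.1 = z.2 := by
          have := congrArg Prod.fst h; simpa using this
        exact this
      set S' := S \ {z, Prod.swap z} with hS'
      have hsub : S' ⊂ S := by
        constructor
        · exact Finset.sdiff_subset
        · intro hSS
          have := hSS hz
          simp [hS'] at this
      have hcard : S.card = S'.card + 2 := by
        have hsubset : ({z, Prod.swap z} : Finset (V × V)) ⊆ S := by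
          intro w hw; simp at hw; rcases hw with rfl | rfl <;> assumption
        have h2 : ({z, Prod.swap z} : Finset (V × V)).card = 2 := by
          rw [Finset.card_insert_of_notMem (by simpa using hne), Finset.card_singleton]
        have := Finset.card_sdiff_add_card_eq_card hsubset
        rw [← hS'] at this
        omega
      have hS'symm : Symm S' := by
        intro w hw
        simp only [hS', Finset.mem_sdiff, Finset.mem_insert, Finset.mem_singleton] at hw ⊢
        refine ⟨hs _ hw.1, ?_⟩
        rintro (h | h)
        · exact hw.2 (Or.inr (by simp [← h]))
        · exact hw.2 (Or.inl (by simpa using congrArg Prod.swap h))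
      have hS'c : ∀ w ∈ S', w.1 ≠ w.2 := fun w hw => hc w (Finset.mem_sdiff.mp hw).1
      have := ih S' hsub hS'symm hS'c
      rw [hcard]
      exact this.add (even_two)

lemma pdeg_union_of_disjoint {A B : Finset (V × V)} (h : Disjoint A B) (j : J) :
    pdeg col (A ∪ B) j = pdeg col A j + pdeg col B j := by
  unfold pdeg
  rw [Finset.filter_union]
  exact Finset.card_union_of_disjoint (Finset.disjoint_filter_filter h)

lemma pdeg_symmDiff_cast (A B : Finset (V × V)) (j : J) :
    ((pdeg col (symmDiff A B) j : ZMod 2)) = (pdeg col A j : ZMod 2) + (pdeg col B j : ZMod 2) := by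
  unfold pdeg
  have hfilt : (symmDiff A B).filter (fun z => col z.1 = j)
      = symmDiff (A.filter fun z => col z.1 = j) (B.filter fun z => col z.1 = j) := by
    ext z
    simp only [Finset.mem_filter, Finset.mem_symmDiff]
    tauto
  rw [hfilt]
  set X := A.filter fun z => col z.1 = j
  set Y := B.filter fun z => col z.1 = j
  have h1 : (symmDiff X Y).card + #(X ∩ Y) = #(X ∪ Y) := by
    rw [symmDiff_eq_sup_sdiff_inf]
    exact Finset.card_sdiff_add_card_eq_card (Finset.inter_subset_union)
  have h2 := Finset.card_union_add_card_inter X Y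
  have : (symmDiff X Y).card + 2 * #(X ∩ Y) = #X + #Y := by omega
  have hc := congrArg (fun n : ℕ => (n : ZMod 2)) this
  push_cast at hc
  have h2z : (2 : ZMod 2) = 0 := by decide
  rw [h2z] at hc
  simpa using hc

lemma symm_symmDiff {A B : Finset (V × V)} (hA : Symm A) (hB : Symm B) : Symm (symmDiff A B) := by
  intro z hz
  rw [Finset.mem_symmDiff] at hz ⊢
  rcases hz with ⟨h1, h2⟩ | ⟨h1, h2⟩
  · exact Or.inl ⟨hA _ h1, fun hc => h2 (symm_mem_swap hB hc)⟩
  · exact Or.inr ⟨hB _ h1, fun hc => h2 (symm_mem_swap hA hc)⟩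

lemma symmDiff_subset {A B E : Finset (V × V)} (hA : A ⊆ E) (hB : B ⊆ E) : symmDiff A B ⊆ E := by
  intro z hz
  rw [Finset.mem_symmDiff] at hz
  rcases hz with ⟨h, _⟩ | ⟨h, _⟩
  exacts [hA h, hB h]

/-- a maximal even symmetric subset exists; its complement is "acyclic". -/
lemma exists_maxeven (E : Finset (V × V)) (hs : Symm E) :
    ∃ C ⊆ E, Symm C ∧ (∀ j, Even (pdeg col C j)) ∧
      ∀ D ⊆ E \ C, Symm D → (∀ j, Even (pdeg col D j)) → D = ∅ := by
  set fam := E.powerset.filter (fun C => Symm C ∧ ∀ j, Even (pdeg col C j)) with hfam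
  have hne : fam.Nonempty := by
    refine ⟨∅, ?_⟩
    simp only [hfam, Finset.mem_filter, Finset.mem_powerset]
    refine ⟨Finset.empty_subset _, fun z hz => by simp at hz, fun j => ?_⟩
    simp [pdeg]
  obtain ⟨C, hCmem, hCmax⟩ := Finset.exists_max_image fam (fun C => C.card) hne
  simp only [hfam, Finset.mem_filter, Finset.mem_powerset] at hCmem
  obtain ⟨hCE, hCsymm, hCeven⟩ := hCmem
  refine ⟨C, hCE, hCsymm, hCeven, ?_⟩
  intro D hD hDsymm hDeven
  by_contra hDne
  have hdisj : Disjoint C D := by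
    rw [Finset.disjoint_right]
    intro z hzD hzC
    have := hD hzD
    rw [Finset.mem_sdiff] at this
    exact this.2 hzC
  have hmem : C ∪ D ∈ fam := by
    simp only [hfam, Finset.mem_filter, Finset.mem_powerset]
    refine ⟨?_, ?_, ?_⟩
    · intro z hz
      rcases Finset.mem_union.mp hz with h | h
      · exact hCE h
      · exact (Finset.mem_sdiff.mp (hD h)).1
    · intro z hz
      rcases Finset.mem_union.mp hz with h | h
      · exact Finset.mem_union_left _ (hCsymm _ h)
      · exact Finset.mem_union_right _ (hDsymm _ h)
    · intro j
      rw [pdeg_union_of_disjoint col hdisj]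
      exact (hCeven j).add (hDeven j)
  have hcard := hCmax _ hmem
  rw [Finset.card_union_of_disjoint hdisj] at hcard
  have : D.card = 0 := by omega
  exact hDne (Finset.card_eq_zero.mp this)

/-- adjacency relation between columns induced by a pair set. -/
def Rel (E : Finset (V × V)) (a b : J) : Prop := ∃ z ∈ E, col z.1 = a ∧ col z.2 = b

noncomputable def chi (a j : J) : ZMod 2 := if j = a then 1 else 0

lemma z2_add_self : ∀ x : ZMod 2, x + x = 0 := by decide

lemma pdeg_pair_cast {E : Finset (V × V)} (hc : Cross col E) {z : V × V} (hz : z ∈ E) (j : J) :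
    ((pdeg col ({z, Prod.swap z} : Finset (V × V)) j : ZMod 2))
      = chi (col z.1) j + chi (col z.2) j := by
  have hcz : col z.1 ≠ col z.2 := hc z hz
  have hne : z ≠ Prod.swap z := by
    intro h
    exact hcz (by rw [show z.2 = (Prod.swap z).1 from rfl, ← h])
  unfold pdeg chi
  have hswap1 : (Prod.swap z).1 = z.2 := rfl
  rcases eq_or_ne j (col z.1) with h1 | h1 <;> rcases eq_or_ne j (col z.2) with h2 | h2
  · exact absurd (h1.symm.trans h2) hcz
  · have hfe : ({z, Prod.swap z} : Finset (V × V)).filter (fun w => col w.1 = j) = {z} := by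
      ext w
      simp only [Finset.mem_filter, Finset.mem_insert, Finset.mem_singleton]
      constructor
      · rintro ⟨rfl | rfl, hw⟩
        · rfl
        · rw [hswap1] at hw; exact absurd hw.symm h2
      · rintro rfl; exact ⟨Or.inl rfl, h1.symm⟩
    rw [hfe, if_pos h1, if_neg h2]
    simp
  · have hfe : ({z, Prod.swap z} : Finset (V × V)).filter (fun w => col w.1 = j)
        = {Prod.swap z} := by
      ext w
      simp only [Finset.mem_filter, Finset.mem_insert, Finset.mem_singleton]
      constructor
      · rintro ⟨rfl | rfl, hw⟩
        · exact absurd hw.symm h1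
        · rfl
      · rintro rfl; exact ⟨Or.inr rfl, h2.symm⟩
    rw [hfe, if_neg h1, if_pos h2]
    simp
  · have hfe : ({z, Prod.swap z} : Finset (V × V)).filter (fun w => col w.1 = j) = ∅ := by
      ext w
      simp only [Finset.mem_filter, Finset.mem_insert, Finset.mem_singleton,
        Finset.notMem_empty, iff_false, not_and]
      rintro (rfl | rfl)
      · exact fun hw => h1 hw.symm
      · rw [hswap1]; exact fun hw => h2 hw.symm
    rw [hfe, if_neg h1, if_neg h2]
    simp

lemma path_of_reach (E : Finset (V × V)) (hs : Symm E) (hc : Cross col E) {a b : J}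
    (h : Relation.ReflTransGen (Rel col E) a b) :
    ∃ P ⊆ E, Symm P ∧ ∀ j, ((pdeg col P j : ZMod 2)) = chi a j + chi b j := by
  induction h with
  | refl =>
    refine ⟨∅, Finset.empty_subset _, fun z hz => by simp at hz, fun j => ?_⟩
    simp [pdeg]
    exact (z2_add_self _).symm
  | @tail b c hab hbc ih =>
    obtain ⟨P, hPE, hPsymm, hPdeg⟩ := ih
    obtain ⟨z, hzE, hz1, hz2⟩ := hbc
    refine ⟨symmDiff P {z, Prod.swap z}, ?_, ?_, ?_⟩
    · refine symmDiff_subset hPE ?_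
      intro w hw
      simp only [Finset.mem_insert, Finset.mem_singleton] at hw
      rcases hw with rfl | rfl
      · exact hzE
      · exact hs _ hzE
    · refine symm_symmDiff hPsymm ?_
      intro w hw
      simp only [Finset.mem_insert, Finset.mem_singleton] at hw ⊢
      rcases hw with rfl | rfl
      · exact Or.inr rfl
      · exact Or.inl (by simp)
    · intro j
      rw [pdeg_symmDiff_cast, hPdeg, pdeg_pair_cast col hc hzE, hz1, hz2]
      linear_combination z2_add_self (chi b j)

lemma repair (EE : Finset (V × V)) (hs : Symm EE) (hc : Cross col EE) (TT : Finset J)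
    (hconn : ∀ a ∈ TT, ∀ b ∈ TT, Relation.ReflTransGen (Rel col EE) a b)
    (δ : J → ZMod 2) (hsupp : ∀ j ∉ TT, δ j = 0) (hsum : ∑ j : J, δ j = 0) :
    ∃ D ⊆ EE, Symm D ∧ ∀ j, ((pdeg col D j : ZMod 2)) = δ j := by
  set n := ((Finset.univ : Finset J).filter fun j => δ j ≠ 0).card with hn
  clear_value n
  induction n using Nat.strong_induction_on generalizing δ with
  | _ n ih =>
  rcases Finset.eq_empty_or_nonempty ((Finset.univ : Finset J).filter fun j => δ j ≠ 0) with
    hemp | ⟨a, ha⟩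
  · refine ⟨∅, Finset.empty_subset _, fun z hz => by simp at hz, fun j => ?_⟩
    have : δ j = 0 := by
      by_contra hj
      have : j ∈ (Finset.univ : Finset J).filter fun j => δ j ≠ 0 := by
        simp [hj]
      rw [hemp] at this; simp at this
    simp [pdeg, this]
  · simp only [Finset.mem_filter, Finset.mem_univ, true_and] at ha
    have hδa : δ a = 1 := by
      rcases (by decide : ∀ x : ZMod 2, x = 0 ∨ x = 1) (δ a) with h | h
      · exact absurd h ha
      · exact h
    -- find b ≠ a with δ b = 1
    have hb : ∃ b, b ≠ a ∧ δ b ≠ 0 := by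
      by_contra hno
      push_neg at hno
      have : ∑ j : J, δ j = δ a := by
        rw [Finset.sum_eq_single a]
        · intro j _ hj
          exact hno j hj
        · intro hcon; exact absurd (Finset.mem_univ a) hcon
      rw [hsum, hδa] at this
      exact one_ne_zero this.symm
    obtain ⟨b, hba, hbne⟩ := hb
    have hδb : δ b = 1 := by
      rcases (by decide : ∀ x : ZMod 2, x = 0 ∨ x = 1) (δ b) with h | h
      · exact absurd h hbne
      · exact h
    have haT : a ∈ TT := by by_contra h; exact ha (hsupp a h)
    have hbT : b ∈ TT := by by_contra h; exact hbne (hsupp b h)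
    obtain ⟨P, hPE, hPsymm, hPdeg⟩ := path_of_reach col EE hs hc (hconn a haT b hbT)
    set δ' : J → ZMod 2 := fun j => δ j + chi a j + chi b j with hδ'
    have hsupp' : ∀ j ∉ TT, δ' j = 0 := by
      intro j hj
      have h1 : j ≠ a := fun h => hj (h ▸ haT)
      have h2 : j ≠ b := fun h => hj (h ▸ hbT)
      simp [hδ', hsupp j hj, chi, h1, h2]
    have hsum' : ∑ j : J, δ' j = 0 := by
      simp only [hδ']
      rw [Finset.sum_add_distrib, Finset.sum_add_distrib, hsum]
      have hca : ∑ j : J, chi a j = 1 := by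
        unfold chi
        rw [Finset.sum_ite_eq' Finset.univ a (fun _ => (1 : ZMod 2))]
        simp
      have hcb : ∑ j : J, chi b j = 1 := by
        unfold chi
        rw [Finset.sum_ite_eq' Finset.univ b (fun _ => (1 : ZMod 2))]
        simp
      rw [hca, hcb]
      decide
    have hcard : ((Finset.univ : Finset J).filter fun j => δ' j ≠ 0).card < n := by
      have hss : ((Finset.univ : Finset J).filter fun j => δ' j ≠ 0)
          ⊂ ((Finset.univ : Finset J).filter fun j => δ j ≠ 0) := by
        constructor
        · intro j hj
          simp only [Finset.mem_filter, Finset.mem_univ, true_and, hδ'] at hj ⊢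
          intro h0
          rcases eq_or_ne j a with rfl | hja
          · exact absurd (h0.symm.trans hδa) zero_ne_one
          · rcases eq_or_ne j b with rfl | hjb
            · exact absurd (h0.symm.trans hδb) zero_ne_one
            · exact hj (by simp [chi, h0, hja, hjb])
        · intro hsub
          have : a ∈ (Finset.univ : Finset J).filter fun j => δ' j ≠ 0 :=
            hsub (by simp [ha])
          simp only [Finset.mem_filter, Finset.mem_univ, true_and, hδ'] at this
          apply this
          simp only [chi, hδa, if_pos rfl, if_neg (Ne.symm hba)]
          decide
      rw [hn]
      exact Finset.card_lt_card hss
    obtain ⟨D', hD'E, hD'symm, hD'deg⟩ := ih _ hcard δ' hsupp' hsum' rfl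
    refine ⟨symmDiff D' P, symmDiff_subset hD'E hPE, symm_symmDiff hD'symm hPsymm, ?_⟩
    intro j
    rw [pdeg_symmDiff_cast, hD'deg, hPdeg]
    simp only [hδ']
    linear_combination z2_add_self (chi a j) + z2_add_self (chi b j)

lemma pair_symm (z : V × V) : Symm ({z, Prod.swap z} : Finset (V × V)) := by
  intro w hw
  simp only [Finset.mem_insert, Finset.mem_singleton] at hw ⊢
  rcases hw with rfl | rfl
  · exact Or.inr rfl
  · exact Or.inl (by simp)

lemma acyclic_label : ∀ (NZ : Finset (V × V)), Symm NZ → Cross col NZ →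
    (∀ D ⊆ NZ, Symm D → (∀ j, Even (pdeg col D j)) → D = ∅) →
    ∀ (o : V → ZMod 2),
    ∃ x : J → ZMod 2, ∀ z ∈ NZ, x (col z.1) + o z.1 = x (col z.2) + o z.2 := by
  intro NZ
  induction NZ using Finset.strongInductionOn with
  | _ NZ ih =>
  intro hs hc hacyc o
  rcases NZ.eq_empty_or_nonempty with rfl | ⟨z₀, hz₀⟩
  · exact ⟨fun _ => 0, fun z hz => by simp at hz⟩
  · set pair : Finset (V × V) := {z₀, Prod.swap z₀} with hpair
    have hpairsub : pair ⊆ NZ := by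
      intro w hw
      simp only [hpair, Finset.mem_insert, Finset.mem_singleton] at hw
      rcases hw with rfl | rfl
      · exact hz₀
      · exact hs _ hz₀
    set NZ' := NZ \ pair with hNZ'
    have hz₀not : z₀ ∉ NZ' := by simp [hNZ', hpair]
    have hsub : NZ' ⊂ NZ := by
      constructor
      · exact Finset.sdiff_subset
      · intro hss
        exact hz₀not (hss hz₀)
    have hs' : Symm NZ' := by
      intro w hw
      simp only [hNZ', Finset.mem_sdiff, hpair, Finset.mem_insert, Finset.mem_singleton]
        at hw ⊢
      refine ⟨hs _ hw.1, ?_⟩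
      rintro (h | h)
      · exact hw.2 (Or.inr (by simp [← h]))
      · exact hw.2 (Or.inl (by simpa using congrArg Prod.swap h))
    have hc' : Cross col NZ' := fun z hz => hc z (Finset.mem_sdiff.mp hz).1
    have hacyc' : ∀ D ⊆ NZ', Symm D → (∀ j, Even (pdeg col D j)) → D = ∅ :=
      fun D hD hsd hed => hacyc D (hD.trans Finset.sdiff_subset) hsd hed
    obtain ⟨x', hx'⟩ := ih NZ' hsub hs' hc' hacyc' o
    have hnotreach : ¬ Relation.ReflTransGen (Rel col NZ') (col z₀.1) (col z₀.2) := by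
      intro hr
      obtain ⟨P, hPE, hPsymm, hPdeg⟩ := path_of_reach col NZ' hs' hc' hr
      have hDsub : symmDiff P pair ⊆ NZ :=
        symmDiff_subset (hPE.trans Finset.sdiff_subset) hpairsub
      have hDsymm : Symm (symmDiff P pair) := symm_symmDiff hPsymm (pair_symm z₀)
      have hDeven : ∀ j, Even (pdeg col (symmDiff P pair) j) := by
        intro j
        rw [even_iff_cast, pdeg_symmDiff_cast, hPdeg,
          pdeg_pair_cast col hc hz₀ j]
        linear_combination z2_add_self (chi (col z₀.1) j) + z2_add_self (chi (col z₀.2) j)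
      have hD0 := hacyc _ hDsub hDsymm hDeven
      have : P = pair := by
        have := symmDiff_eq_bot.mp hD0
        exact this
      have : z₀ ∈ NZ' := hPE (by rw [this]; simp [hpair])
      exact hz₀not this
    set ε := x' (col z₀.1) + o z₀.1 + x' (col z₀.2) + o z₀.2 with hε
    refine ⟨fun j => x' j +
      (if Relation.ReflTransGen (Rel col NZ') (col z₀.1) j then ε else 0), ?_⟩
    have hval : ∀ z ∈ NZ', (x' (col z.1) +
        (if Relation.ReflTransGen (Rel col NZ') (col z₀.1) (col z.1) then ε else 0)) + o z.1
        = (x' (col z.2) +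
        (if Relation.ReflTransGen (Rel col NZ') (col z₀.1) (col z.2) then ε else 0)) + o z.2 := by
      intro z hz
      have hiff : Relation.ReflTransGen (Rel col NZ') (col z₀.1) (col z.1)
          ↔ Relation.ReflTransGen (Rel col NZ') (col z₀.1) (col z.2) := by
        constructor
        · intro h; exact h.tail ⟨z, hz, rfl, rfl⟩
        · intro h; exact h.tail ⟨Prod.swap z, hs' _ hz, rfl, rfl⟩
      by_cases hr : Relation.ReflTransGen (Rel col NZ') (col z₀.1) (col z.1)
      · rw [if_pos hr, if_pos (hiff.mp hr)]
        linear_combination hx' z hz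
      · rw [if_neg hr, if_neg (fun h => hr (hiff.mpr h))]
        linear_combination hx' z hz
    have hz₀eq : (x' (col z₀.1) +
        (if Relation.ReflTransGen (Rel col NZ') (col z₀.1) (col z₀.1) then ε else 0)) + o z₀.1
        = (x' (col z₀.2) +
        (if Relation.ReflTransGen (Rel col NZ') (col z₀.1) (col z₀.2) then ε else 0)) + o z₀.2 := by
      rw [if_pos Relation.ReflTransGen.refl, if_neg hnotreach, hε]
      linear_combination z2_add_self (x' (col z₀.1)) + z2_add_self (o z₀.1)
    intro z hz
    by_cases hz' : z ∈ NZ'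
    · exact hval z hz'
    · have hzp : z ∈ pair := by
        by_contra hnp
        exact hz' (Finset.mem_sdiff.mpr ⟨hz, hnp⟩)
      simp only [hpair, Finset.mem_insert, Finset.mem_singleton] at hzp
      rcases hzp with rfl | rfl
      · exact hz₀eq
      · exact hz₀eq.symm

end AmiableTK


namespace AmiableMain
open AmiableTK Finset
open scoped Classical

variable {s : ℕ} (R : SimpleGraph (Fin 3 × Fin s))

lemma count_ends (j : Fin s) (γ : (Fin 3 × Fin s) → (Fin 3 × Fin s) → Fin 3) (c : Fin 3) :
    ((Finset.univ : Finset ((Fin 3 × Fin s) × (Fin 3 × Fin s))).filter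
      fun z => R.Adj z.1 z.2 ∧ z.1.2 = j ∧ γ z.1 z.2 = c).card
    = ∑ r : Fin 3, ((Finset.univ : Finset (Fin 3 × Fin s)).filter
        fun w => R.Adj (r, j) w ∧ γ (r, j) w = c).card := by
  rw [Finset.card_eq_sum_card_fiberwise
    (f := fun z : (Fin 3 × Fin s) × (Fin 3 × Fin s) => z.1.1)
    (t := Finset.univ) (fun z _ => Finset.mem_univ _)]
  refine Finset.sum_congr rfl ?_
  intro r _
  apply Finset.card_bij (fun z _ => z.2)
  · intro z hz
    simp only [Finset.mem_filter, Finset.mem_univ, true_and] at hz ⊢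
    obtain ⟨⟨hadj, hcol, hκ⟩, hr⟩ := hz
    have hz1 : z.1 = (r, j) := Prod.ext hr hcol
    rw [← hz1]
    exact ⟨hadj, hκ⟩
  · intro z hz z' hz' hzz
    simp only [Finset.mem_filter, Finset.mem_univ, true_and] at hz hz'
    obtain ⟨⟨_, hcol, _⟩, hr⟩ := hz
    obtain ⟨⟨_, hcol', _⟩, hr'⟩ := hz'
    have h1 : z.1 = (r, j) := Prod.ext hr hcol
    have h2 : z'.1 = (r, j) := Prod.ext hr' hcol'
    exact Prod.ext (h1.trans h2.symm) hzz
  · intro w hw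
    simp only [Finset.mem_filter, Finset.mem_univ, true_and] at hw
    refine ⟨((r, j), w), ?_, rfl⟩
    rw [Finset.mem_filter, Finset.mem_filter]
    exact ⟨⟨Finset.mem_univ _, hw.1, rfl, hw.2⟩, rfl⟩

lemma count_ends_deg (j : Fin s) :
    ((Finset.univ : Finset ((Fin 3 × Fin s) × (Fin 3 × Fin s))).filter
      fun z => R.Adj z.1 z.2 ∧ z.1.2 = j).card
    = ∑ r : Fin 3, ((Finset.univ : Finset (Fin 3 × Fin s)).filter
        fun w => R.Adj (r, j) w).card := by
  rw [Finset.card_eq_sum_card_fiberwise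
    (f := fun z : (Fin 3 × Fin s) × (Fin 3 × Fin s) => z.1.1)
    (t := Finset.univ) (fun z _ => Finset.mem_univ _)]
  refine Finset.sum_congr rfl ?_
  intro r _
  apply Finset.card_bij (fun z _ => z.2)
  · intro z hz
    simp only [Finset.mem_filter, Finset.mem_univ, true_and] at hz ⊢
    obtain ⟨⟨hadj, hcol⟩, hr⟩ := hz
    have hz1 : z.1 = (r, j) := Prod.ext hr hcol
    rw [← hz1]
    exact hadj
  · intro z hz z' hz' hzz
    simp only [Finset.mem_filter, Finset.mem_univ, true_and] at hz hz'
    obtain ⟨⟨_, hcol⟩, hr⟩ := hz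
    obtain ⟨⟨_, hcol'⟩, hr'⟩ := hz'
    have h1 : z.1 = (r, j) := Prod.ext hr hcol
    have h2 : z'.1 = (r, j) := Prod.ext hr' hcol'
    exact Prod.ext (h1.trans h2.symm) hzz
  · intro w hw
    simp only [Finset.mem_filter, Finset.mem_univ, true_and] at hw
    refine ⟨((r, j), w), ?_, rfl⟩
    rw [Finset.mem_filter, Finset.mem_filter]
    exact ⟨⟨Finset.mem_univ _, hw, rfl⟩, rfl⟩

lemma dColor_eq_card (g : Sym2 (Fin 3 × Fin s) → Fin 3) (c : Fin 3) (v : Fin 3 × Fin s) :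
    dColor R g c v
      = ((Finset.univ : Finset (Fin 3 × Fin s)).filter
          fun w => R.Adj v w ∧ g s(v, w) = c).card := by
  unfold dColor
  rw [← Set.ncard_coe_finset]
  congr 1
  ext w
  simp

lemma ncard_nbr_eq_card (v : Fin 3 × Fin s) :
    (R.neighborSet v).ncard
      = ((Finset.univ : Finset (Fin 3 × Fin s)).filter fun w => R.Adj v w).card := by
  rw [← Set.ncard_coe_finset]
  congr 1
  ext w
  simp [SimpleGraph.neighborSet]

lemma inj_helper (φ : Fin 3 → Fin 3) (r0 r1 r2 : Fin 3)
    (hcov : ∀ r, r = r0 ∨ r = r1 ∨ r = r2)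
    (a b : Fin 3) (h0 : φ r0 = 0) (h1 : φ r1 = a) (h2 : φ r2 = b)
    (ha : a ≠ 0) (hb : b ≠ 0) (hab : a ≠ b) : Function.Injective φ := by
  intro u v h
  rcases hcov u with rfl | rfl | rfl <;> rcases hcov v with rfl | rfl | rfl
  · rfl
  · rw [h0, h1] at h; exact absurd h.symm ha
  · rw [h0, h2] at h; exact absurd h.symm hb
  · rw [h1, h0] at h; exact absurd h ha
  · rfl
  · rw [h1, h2] at h; exact absurd h hab
  · rw [h2, h0] at h; exact absurd h hb
  · rw [h2, h1] at h; exact absurd h (Ne.symm hab)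
  · rfl

lemma fin3_neg_facts : ∀ a : Fin 3, a ≠ 0 → (-a ≠ 0 ∧ -a ≠ a) := by decide

lemma z2_cases : ∀ t : ZMod 2, t = 0 ∨ t = 1 := by decide

end AmiableMain

open AmiableTK AmiableMain Finset
open scoped Classical

/-- Suppose `R_C` is eulerian and, for some row `i`: at most one component of the
subgraph `R[V_i]` induced by row `i` has more than one vertex, and every column
containing an isolated vertex of `R[V_i]` has at most one vertex of positive
degree in `R`.  Then `R` has an amiable coloring. -/
theorem stmt10 {s : ℕ} (R : SimpleGraph (Fin 3 × Fin s))
    (hcol : ColIndep R) (heul : EulerianRC R)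
    (i : Fin 3)
    (hone : ∀ K K' : (R.induce (rowSet s i)).ConnectedComponent,
      1 < K.supp.ncard → 1 < K'.supp.ncard → K = K')
    (hcols : ∀ j, (∀ j', ¬ R.Adj (i, j) (i, j')) →
      ∀ a b : Fin 3, (R.neighborSet (a, j)).Nonempty →
        (R.neighborSet (b, j)).Nonempty → a = b) :
    ∃ (f : Fin 3 × Fin s → Fin 3) (g : Sym2 (Fin 3 × Fin s) → Fin 3),
      Amiable R f g := by
  classical
  obtain ⟨p, q, hpi, hqi, hpq, hcover⟩ :
      ∃ p q : Fin 3, p ≠ i ∧ q ≠ i ∧ p ≠ q ∧ ∀ r, r = i ∨ r = p ∨ r = q := by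
    fin_cases i
    · exact ⟨1, 2, by decide, by decide, by decide, by decide⟩
    · exact ⟨0, 2, by decide, by decide, by decide, by decide⟩
    · exact ⟨0, 1, by decide, by decide, by decide, by decide⟩
  set T : Finset (Fin s) := Finset.univ.filter (fun j => ∃ j', R.Adj (i, j) (i, j'))
    with hTdef
  have hTmem : ∀ j : Fin s, j ∈ T ↔ ∃ j', R.Adj (i, j) (i, j') := by
    intro j; simp [hTdef]
  have hcross : ∀ u w : Fin 3 × Fin s, R.Adj u w → u.2 ≠ w.2 := by
    rintro ⟨a, j⟩ ⟨b, j'⟩ hadj rfl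
    exact hcol a b j hadj
  have hactuniq : ∀ j, j ∉ T → ∀ a b : Fin 3,
      (∃ w, R.Adj (a, j) w) → (∃ w, R.Adj (b, j) w) → a = b := by
    intro j hj a b ha hb
    refine hcols j (fun j' hadj => hj ((hTmem j).mpr ⟨j', hadj⟩)) a b ?_ ?_
    · obtain ⟨w, hw⟩ := ha; exact ⟨w, hw⟩
    · obtain ⟨w, hw⟩ := hb; exact ⟨w, hw⟩
  set actRow : Fin s → Fin 3 :=
    fun j => if h : ∃ r : Fin 3, ∃ w, R.Adj (r, j) w then h.choose else p with hactdef
  have hactRow : ∀ j, j ∉ T → ∀ u : Fin 3 × Fin s, u.2 = j →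
      (∃ w, R.Adj u w) → u.1 = actRow j := by
    intro j hj u hc2 hu
    have hu' : ∃ w, R.Adj (u.1, j) w := by
      obtain ⟨w, hw⟩ := hu
      exact ⟨w, by rw [← hc2]; exact hw⟩
    have hex : ∃ r : Fin 3, ∃ w, R.Adj (r, j) w := ⟨u.1, hu'⟩
    have : actRow j = hex.choose := by rw [hactdef]; simp only [hex, dif_pos]
    rw [this]
    exact hactuniq j hj u.1 hex.choose hu' hex.choose_spec
  -- the pair-sets
  set EW : Finset ((Fin 3 × Fin s) × (Fin 3 × Fin s)) := Finset.univ.filter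
      (fun z => R.Adj z.1 z.2 ∧ ¬(z.1.1 = i ∧ z.1.2 ∈ T) ∧ ¬(z.2.1 = i ∧ z.2.2 ∈ T))
    with hEWdef
  have hEWsymm : Symm EW := by
    intro z hz
    simp only [hEWdef, Finset.mem_filter, Finset.mem_univ, true_and] at hz ⊢
    exact ⟨hz.1.symm, hz.2.2, hz.2.1⟩
  have hEWcross : Cross (Prod.snd : Fin 3 × Fin s → Fin s) EW := by
    intro z hz
    simp only [hEWdef, Finset.mem_filter, Finset.mem_univ, true_and] at hz
    exact hcross _ _ hz.1
  obtain ⟨C, hCE, hCsymm, hCeven, hCmax⟩ := exists_maxeven (Prod.snd : Fin 3 × Fin s → Fin s) EW hEWsymm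
  set NZ : Finset ((Fin 3 × Fin s) × (Fin 3 × Fin s)) := EW \ C with hNZdef
  have hNZE : NZ ⊆ EW := Finset.sdiff_subset
  have hNZsymm : Symm NZ := by
    intro z hz
    rw [hNZdef, Finset.mem_sdiff] at hz ⊢
    exact ⟨hEWsymm _ hz.1, fun hc => hz.2 (symm_mem_swap hCsymm hc)⟩
  have hNZcross : Cross (Prod.snd : Fin 3 × Fin s → Fin s) NZ := fun z hz => hEWcross z (hNZE hz)
  have hNZacyc : ∀ D ⊆ NZ, Symm D → (∀ j, Even (pdeg (Prod.snd : Fin 3 × Fin s → Fin s) D j)) → D = ∅ := by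
    intro D hD hsd hed
    exact hCmax D hD hsd hed
  set o : Fin 3 × Fin s → ZMod 2 := fun u => if u.2 ∈ T ∧ u.1 = q then 1 else 0 with hodef
  obtain ⟨x, hx⟩ := acyclic_label (Prod.snd : Fin 3 × Fin s → Fin s) NZ hNZsymm hNZcross hNZacyc o
  set A : Fin s → Fin 3 := fun j => if x j = 0 then 1 else 2 with hAdef
  set B : Fin s → Fin 3 := fun j => if x j = 0 then 2 else 1 with hBdef
  have hA0 : ∀ j, A j ≠ 0 := by intro j; rw [hAdef]; dsimp only; split <;> decide
  have hB0 : ∀ j, B j ≠ 0 := by intro j; rw [hBdef]; dsimp only; split <;> decide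
  have hAB : ∀ j, A j ≠ B j := by
    intro j; rw [hAdef, hBdef]; dsimp only; split <;> decide
  set oth : Fin 3 → Fin 3 := fun a => if a = 0 then 1 else 0 with hothdef
  set f : Fin 3 × Fin s → Fin 3 := fun u =>
    if u.2 ∈ T then (if u.1 = i then 0 else if u.1 = p then A u.2 else B u.2)
    else (if u.1 = actRow u.2 then A u.2 else if u.1 = oth (actRow u.2) then 0 else B u.2)
    with hfdef
  have hfinj : ∀ j, Function.Injective (fun r : Fin 3 => f (r, j)) := by
    intro j
    by_cases hjT : j ∈ T
    · refine inj_helper _ i p q hcover (A j) (B j) ?_ ?_ ?_ (hA0 j) (hB0 j) (hAB j)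
      · show f (i, j) = 0
        rw [hfdef]; dsimp only
        rw [if_pos hjT, if_pos rfl]
      · show f (p, j) = A j
        rw [hfdef]; dsimp only
        rw [if_pos hjT, if_neg hpi, if_pos rfl]
      · show f (q, j) = B j
        rw [hfdef]; dsimp only
        rw [if_pos hjT, if_neg hqi, if_neg (Ne.symm hpq)]
    · have hex : ∃ c : Fin 3, c ≠ actRow j ∧ c ≠ oth (actRow j) ∧
          ∀ r : Fin 3, r = oth (actRow j) ∨ r = actRow j ∨ r = c := by
        have hgen : ∀ a : Fin 3, ∃ c : Fin 3, c ≠ a ∧ c ≠ (if a = 0 then 1 else 0) ∧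
            ∀ r : Fin 3, r = (if a = 0 then 1 else 0) ∨ r = a ∨ r = c := by decide
        obtain ⟨c, h1, h2, h3⟩ := hgen (actRow j)
        exact ⟨c, h1, h2, h3⟩
      obtain ⟨c, hc1, hc2, hcov3⟩ := hex
      have hothne : oth (actRow j) ≠ actRow j := by
        have : ∀ a : Fin 3, (if a = 0 then (1 : Fin 3) else 0) ≠ a := by decide
        exact this _
      refine inj_helper _ (oth (actRow j)) (actRow j) c hcov3 (A j) (B j)
        ?_ ?_ ?_ (hA0 j) (hB0 j) (hAB j)
      · show f (oth (actRow j), j) = 0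
        rw [hfdef]; dsimp only
        rw [if_neg hjT, if_neg hothne, if_pos rfl]
      · show f (actRow j, j) = A j
        rw [hfdef]; dsimp only
        rw [if_neg hjT, if_pos rfl]
      · show f (c, j) = B j
        rw [hfdef]; dsimp only
        rw [if_neg hjT, if_neg hc1, if_neg hc2]
  have hlab : ∀ u : Fin 3 × Fin s, (∃ w, R.Adj u w) → ¬(u.1 = i ∧ u.2 ∈ T) →
      f u = (if x u.2 + o u = 0 then 1 else 2) := by
    intro u hu hniT
    by_cases hT2 : u.2 ∈ T
    · have hui : u.1 ≠ i := fun h => hniT ⟨h, hT2⟩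
      by_cases hup : u.1 = p
      · have ho : o u = 0 := by
          rw [hodef]; dsimp only
          rw [if_neg ?_]
          rintro ⟨-, hq2⟩
          exact hpq (hup.symm.trans hq2)
        rw [hfdef]; dsimp only
        rw [if_pos hT2, if_neg hui, if_pos hup, ho, add_zero, hAdef]
      · have huq : u.1 = q := by
          rcases hcover u.1 with h | h | h
          · exact absurd h hui
          · exact absurd h hup
          · exact h
        have ho : o u = 1 := by
          rw [hodef]; dsimp only
          rw [if_pos ⟨hT2, huq⟩]
        rw [hfdef]; dsimp only
        rw [if_pos hT2, if_neg hui, if_neg hup, hBdef, ho]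
        dsimp only
        rcases z2_cases (x u.2) with h | h <;> rw [h]
        · rw [if_pos rfl, if_neg (by decide)]
        · rw [if_neg (by decide), if_pos (by decide)]
    · have hora : u.1 = actRow u.2 := hactRow u.2 hT2 u rfl hu
      have ho : o u = 0 := by
        rw [hodef]; dsimp only
        rw [if_neg (fun hc => hT2 hc.1)]
      rw [hfdef]; dsimp only
      rw [if_neg hT2, if_pos hora, ho, add_zero, hAdef]
  have hfiT : ∀ u : Fin 3 × Fin s, u.1 = i → u.2 ∈ T → f u = 0 := by
    intro u h1 h2
    rw [hfdef]; dsimp only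
    rw [if_pos h2, if_pos h1]
  have hf0ne : ∀ u : Fin 3 × Fin s, (∃ w, R.Adj u w) → ¬(u.1 = i ∧ u.2 ∈ T) →
      f u ≠ 0 := by
    intro u hu hn
    rw [hlab u hu hn]
    split <;> decide
  have hf0iff : ∀ u : Fin 3 × Fin s, (∃ w, R.Adj u w) →
      (f u = 0 ↔ (u.1 = i ∧ u.2 ∈ T)) := by
    intro u hu
    constructor
    · intro h0
      by_contra hn
      exact hf0ne u hu hn h0
    · intro h
      exact hfiT u h.1 h.2
  have hmono : ∀ z ∈ NZ, f z.1 = f z.2 := by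
    intro z hz
    have hzEW := hNZE hz
    simp only [hEWdef, Finset.mem_filter, Finset.mem_univ, true_and] at hzEW
    obtain ⟨hadj, hn1, hn2⟩ := hzEW
    rw [hlab z.1 ⟨z.2, hadj⟩ hn1, hlab z.2 ⟨z.1, hadj.symm⟩ hn2]
    rw [hx z hz]
  -- ii pairs
  set iiP : Finset ((Fin 3 × Fin s) × (Fin 3 × Fin s)) := Finset.univ.filter
      (fun z => R.Adj z.1 z.2 ∧ z.1.1 = i ∧ z.2.1 = i) with hiidef
  have hiisymm : Symm iiP := by
    intro z hz
    simp only [hiidef, Finset.mem_filter, Finset.mem_univ, true_and] at hz ⊢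
    exact ⟨hz.1.symm, hz.2.2, hz.2.1⟩
  have hiicross : Cross (Prod.snd : Fin 3 × Fin s → Fin s) iiP := by
    intro z hz
    simp only [hiidef, Finset.mem_filter, Finset.mem_univ, true_and] at hz
    exact hcross _ _ hz.1
  have hii_iT : ∀ z ∈ iiP, (z.1.1 = i ∧ z.1.2 ∈ T) ∧ (z.2.1 = i ∧ z.2.2 ∈ T) := by
    intro z hz
    simp only [hiidef, Finset.mem_filter, Finset.mem_univ, true_and] at hz
    obtain ⟨hadj, h1, h2⟩ := hz
    have e1 : z.1 = (i, z.1.2) := Prod.ext h1 rfl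
    have e2 : z.2 = (i, z.2.2) := Prod.ext h2 rfl
    rw [e1, e2] at hadj
    exact ⟨⟨h1, (hTmem _).mpr ⟨z.2.2, hadj⟩⟩, ⟨h2, (hTmem _).mpr ⟨z.1.2, hadj.symm⟩⟩⟩
  have hconn : ∀ a ∈ T, ∀ b ∈ T, Relation.ReflTransGen (Rel (Prod.snd : Fin 3 × Fin s → Fin s) iiP) a b := by
    have hmemrow : ∀ j : Fin s, ((i, j) : Fin 3 × Fin s) ∈ rowSet s i := fun j => rfl
    have hKbig : ∀ (u v : ↥(rowSet s i)), (R.induce (rowSet s i)).Adj u v →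
        1 < ((R.induce (rowSet s i)).connectedComponentMk u).supp.ncard := by
      intro u v huv
      have hu : u ∈ ((R.induce (rowSet s i)).connectedComponentMk u).supp :=
        (SimpleGraph.ConnectedComponent.mem_supp_iff _ _).mpr rfl
      have hv : v ∈ ((R.induce (rowSet s i)).connectedComponentMk u).supp :=
        (SimpleGraph.ConnectedComponent.mem_supp_iff _ _).mpr
          (SimpleGraph.ConnectedComponent.sound huv.symm.reachable)
      have hne : u ≠ v := huv.ne
      have hsub : ({u, v} : Set ↥(rowSet s i))
          ⊆ ((R.induce (rowSet s i)).connectedComponentMk u).supp := by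
        intro w hw
        rcases hw with rfl | rfl
        · exact hu
        · exact hv
      calc 1 < ({u, v} : Set ↥(rowSet s i)).ncard := by rw [Set.ncard_pair hne]; norm_num
        _ ≤ _ := Set.ncard_le_ncard hsub (Set.toFinite _)
    have hwalk : ∀ (u v : ↥(rowSet s i)) (_ : (R.induce (rowSet s i)).Walk u v),
        Relation.ReflTransGen (Rel (Prod.snd : Fin 3 × Fin s → Fin s) iiP)
          (u.val.2) (v.val.2) := by
      intro u v wk
      induction wk with
      | nil => exact Relation.ReflTransGen.refl
      | @cons a bb cc h pth ih =>
        refine Relation.ReflTransGen.head ⟨(a.val, bb.val), ?_, rfl, rfl⟩ ih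
        simp only [hiidef, Finset.mem_filter, Finset.mem_univ, true_and]
        refine ⟨h, a.property, bb.property⟩
    intro a ha b hb
    rw [hTmem] at ha hb
    obtain ⟨a', haa⟩ := ha
    obtain ⟨b', hbb⟩ := hb
    have hadja : (R.induce (rowSet s i)).Adj ⟨(i, a), hmemrow a⟩ ⟨(i, a'), hmemrow a'⟩ := by
      simp only [SimpleGraph.comap_adj]
      exact haa
    have hadjb : (R.induce (rowSet s i)).Adj ⟨(i, b), hmemrow b⟩ ⟨(i, b'), hmemrow b'⟩ := by
      simp only [SimpleGraph.comap_adj]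
      exact hbb
    have hcomp := hone ((R.induce (rowSet s i)).connectedComponentMk ⟨(i, a), hmemrow a⟩)
      ((R.induce (rowSet s i)).connectedComponentMk ⟨(i, b), hmemrow b⟩)
      (hKbig _ _ hadja) (hKbig _ _ hadjb)
    have hreach : (R.induce (rowSet s i)).Reachable ⟨(i, a), hmemrow a⟩ ⟨(i, b), hmemrow b⟩ :=
      SimpleGraph.ConnectedComponent.eq.mp hcomp
    obtain ⟨wk⟩ := hreach
    exact hwalk _ _ wk
  -- base coloring
  set G0 : (Fin 3 × Fin s) → (Fin 3 × Fin s) → Fin 3 := fun u w =>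
    if f u = 0 then (if f w = 0 then 1 else -f w)
    else if f w = 0 then -f u
    else if (u, w) ∈ NZ then -f u else 0 with hG0def
  have hG0symm : ∀ u w, G0 u w = G0 w u := by
    intro u w
    rw [hG0def]; dsimp only
    by_cases h1 : f u = 0 <;> by_cases h2 : f w = 0
    · rw [if_pos h1, if_pos h2, if_pos h2, if_pos h1]
    · rw [if_pos h1, if_neg h2, if_neg h2, if_pos h1]
    · rw [if_neg h1, if_pos h2, if_pos h2, if_neg h1]
    · rw [if_neg h1, if_neg h2, if_neg h2, if_neg h1]
      by_cases hnz : (u, w) ∈ NZ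
      · have hnz' : (w, u) ∈ NZ := hNZsymm _ hnz
        rw [if_pos hnz, if_pos hnz']
        rw [hmono _ hnz]
      · have hnz' : (w, u) ∉ NZ := fun hc => hnz (symm_mem_swap hNZsymm hc)
        rw [if_neg hnz, if_neg hnz']
  set δ : Fin s → ZMod 2 := fun j => (((Finset.univ :
      Finset ((Fin 3 × Fin s) × (Fin 3 × Fin s))).filter
      (fun z => R.Adj z.1 z.2 ∧ z.1.2 = j ∧ G0 z.1 z.2 = 1)).card : ZMod 2) with hδdef
  -- G0 zero-class is C
  have hG0zero : ∀ z : (Fin 3 × Fin s) × (Fin 3 × Fin s), R.Adj z.1 z.2 →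
      (G0 z.1 z.2 = 0 ↔ z ∈ C) := by
    intro z hadj
    constructor
    · intro h0
      rw [hG0def] at h0; dsimp only at h0
      by_cases h1 : f z.1 = 0
      · rw [if_pos h1] at h0
        by_cases h2 : f z.2 = 0
        · rw [if_pos h2] at h0; exact absurd h0 (by decide)
        · rw [if_neg h2] at h0; exact absurd h0 ((fin3_neg_facts _ h2).1)
      · rw [if_neg h1] at h0
        by_cases h2 : f z.2 = 0
        · rw [if_pos h2] at h0; exact absurd h0 ((fin3_neg_facts _ h1).1)
        · rw [if_neg h2] at h0
          by_cases hnz : (z.1, z.2) ∈ NZ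
          · rw [if_pos hnz] at h0; exact absurd h0 ((fin3_neg_facts _ h1).1)
          · have hn1 : ¬(z.1.1 = i ∧ z.1.2 ∈ T) := fun hc => h1 (hfiT _ hc.1 hc.2)
            have hn2 : ¬(z.2.1 = i ∧ z.2.2 ∈ T) := fun hc => h2 (hfiT _ hc.1 hc.2)
            have hzEW : z ∈ EW := by
              simp only [hEWdef, Finset.mem_filter, Finset.mem_univ, true_and]
              exact ⟨hadj, hn1, hn2⟩
            by_contra hzC
            exact hnz (Finset.mem_sdiff.mpr ⟨hzEW, hzC⟩)
    · intro hzC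
      have hzEW := hCE hzC
      simp only [hEWdef, Finset.mem_filter, Finset.mem_univ, true_and] at hzEW
      obtain ⟨-, hn1, hn2⟩ := hzEW
      have h1 : f z.1 ≠ 0 := hf0ne _ ⟨z.2, hadj⟩ hn1
      have h2 : f z.2 ≠ 0 := hf0ne _ ⟨z.1, hadj.symm⟩ hn2
      have hnz : (z.1, z.2) ∉ NZ := by
        intro hc
        rw [Finset.mem_sdiff] at hc
        exact hc.2 hzC
      rw [hG0def]; dsimp only
      rw [if_neg h1, if_neg h2, if_neg hnz]
  have hCslice : ∀ j, ((Finset.univ : Finset ((Fin 3 × Fin s) × (Fin 3 × Fin s))).filter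
      (fun z => R.Adj z.1 z.2 ∧ z.1.2 = j ∧ G0 z.1 z.2 = 0))
      = C.filter (fun z => z.1.2 = j) := by
    intro j
    ext z
    simp only [Finset.mem_filter, Finset.mem_univ, true_and]
    constructor
    · rintro ⟨hadj, hcol2, h0⟩
      exact ⟨(hG0zero z hadj).mp h0, hcol2⟩
    · rintro ⟨hzC, hcol2⟩
      have hzEW := hCE hzC
      simp only [hEWdef, Finset.mem_filter, Finset.mem_univ, true_and] at hzEW
      exact ⟨hzEW.1, hcol2, (hG0zero z hzEW.1).mpr hzC⟩
  have hDegEven : ∀ j, Even (((Finset.univ :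
      Finset ((Fin 3 × Fin s) × (Fin 3 × Fin s))).filter
      (fun z => R.Adj z.1 z.2 ∧ z.1.2 = j)).card) := by
    intro j
    have h1 := heul j
    rw [ncard_nbr_eq_card, ncard_nbr_eq_card, ncard_nbr_eq_card] at h1
    rw [count_ends_deg R j, Fin.sum_univ_three]
    exact h1
  have hδsupp : ∀ j ∉ T, δ j = 0 := by
    intro j hj
    have hfu : ∀ z : (Fin 3 × Fin s) × (Fin 3 × Fin s), R.Adj z.1 z.2 → z.1.2 = j →
        f z.1 = A j := by
      intro z hadj hc2
      have hniT : ¬(z.1.1 = i ∧ z.1.2 ∈ T) := fun hc => hj (hc2 ▸ hc.2)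
      rw [hlab z.1 ⟨z.2, hadj⟩ hniT]
      have ho : o z.1 = 0 := by
        rw [hodef]; dsimp only
        rw [if_neg (fun hc => hj (hc2 ▸ hc.1))]
      rw [ho, add_zero, hc2, hAdef]
    by_cases hxj : x j = 0
    · have hempty : ((Finset.univ : Finset ((Fin 3 × Fin s) × (Fin 3 × Fin s))).filter
          (fun z => R.Adj z.1 z.2 ∧ z.1.2 = j ∧ G0 z.1 z.2 = 1)) = ∅ := by
        ext z
        simp only [Finset.mem_filter, Finset.mem_univ, true_and, Finset.notMem_empty,
          iff_false, not_and]
        intro hadj hc2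
        have hf1 : f z.1 = 1 := by
          rw [hfu z hadj hc2, hAdef]; dsimp only; rw [if_pos hxj]
        have hf1ne : f z.1 ≠ 0 := by rw [hf1]; decide
        rw [hG0def]; dsimp only
        rw [if_neg hf1ne]
        by_cases h2 : f z.2 = 0
        · rw [if_pos h2, hf1]; decide
        · rw [if_neg h2]
          by_cases hnz : (z.1, z.2) ∈ NZ
          · rw [if_pos hnz, hf1]; decide
          · rw [if_neg hnz]; decide
      rw [hδdef]; dsimp only
      rw [hempty]
      simp
    · have hf2 : ∀ z : (Fin 3 × Fin s) × (Fin 3 × Fin s), R.Adj z.1 z.2 → z.1.2 = j →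
          f z.1 = 2 := by
        intro z hadj hc2
        rw [hfu z hadj hc2, hAdef]; dsimp only; rw [if_neg hxj]
      have hset : ((Finset.univ : Finset ((Fin 3 × Fin s) × (Fin 3 × Fin s))).filter
          (fun z => R.Adj z.1 z.2 ∧ z.1.2 = j ∧ G0 z.1 z.2 = 1))
          = ((Finset.univ : Finset ((Fin 3 × Fin s) × (Fin 3 × Fin s))).filter
            (fun z => R.Adj z.1 z.2 ∧ z.1.2 = j))
          \ ((Finset.univ : Finset ((Fin 3 × Fin s) × (Fin 3 × Fin s))).filter
            (fun z => R.Adj z.1 z.2 ∧ z.1.2 = j ∧ G0 z.1 z.2 = 0)) := by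
        ext z
        simp only [Finset.mem_filter, Finset.mem_univ, true_and, Finset.mem_sdiff]
        constructor
        · rintro ⟨hadj, hc2, hG1⟩
          refine ⟨⟨hadj, hc2⟩, ?_⟩
          rintro ⟨-, -, hG0'⟩
          rw [hG0'] at hG1
          exact absurd hG1 (by decide)
        · rintro ⟨⟨hadj, hc2⟩, hnot⟩
          refine ⟨hadj, hc2, ?_⟩
          have hG0ne : G0 z.1 z.2 ≠ 0 := fun h => hnot ⟨hadj, hc2, h⟩
          have hfz : f z.1 = 2 := hf2 z hadj hc2
          have hfzne : f z.1 ≠ 0 := by rw [hfz]; decide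
          rw [hG0def] at hG0ne ⊢; dsimp only at hG0ne ⊢
          rw [if_neg hfzne] at hG0ne ⊢
          by_cases h2 : f z.2 = 0
          · rw [if_pos h2, hfz]; decide
          · rw [if_neg h2] at hG0ne ⊢
            by_cases hnz : (z.1, z.2) ∈ NZ
            · rw [if_pos hnz, hfz]; decide
            · rw [if_neg hnz] at hG0ne
              exact absurd rfl hG0ne
      have hsub0 : ((Finset.univ : Finset ((Fin 3 × Fin s) × (Fin 3 × Fin s))).filter
          (fun z => R.Adj z.1 z.2 ∧ z.1.2 = j ∧ G0 z.1 z.2 = 0))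
          ⊆ ((Finset.univ : Finset ((Fin 3 × Fin s) × (Fin 3 × Fin s))).filter
            (fun z => R.Adj z.1 z.2 ∧ z.1.2 = j)) := by
        intro z hz
        simp only [Finset.mem_filter, Finset.mem_univ, true_and] at hz ⊢
        exact ⟨hz.1, hz.2.1⟩
      have hcards := Finset.card_sdiff_add_card_eq_card hsub0
      rw [hδdef]; dsimp only
      rw [hset]
      have hev0 : Even (((Finset.univ : Finset ((Fin 3 × Fin s) × (Fin 3 × Fin s))).filter
          (fun z => R.Adj z.1 z.2 ∧ z.1.2 = j ∧ G0 z.1 z.2 = 0)).card) := by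
        rw [hCslice j]
        exact hCeven j
      have hevD := hDegEven j
      rw [← even_iff_cast]
      rw [Nat.even_iff] at hev0 hevD ⊢
      omega
  have hδsum : ∑ j : Fin s, δ j = 0 := by
    set Sg := ((Finset.univ : Finset ((Fin 3 × Fin s) × (Fin 3 × Fin s))).filter
      (fun z => R.Adj z.1 z.2 ∧ G0 z.1 z.2 = 1)) with hSgdef
    have hfib := Finset.card_eq_sum_card_fiberwise
      (f := fun z : (Fin 3 × Fin s) × (Fin 3 × Fin s) => z.1.2)
      (s := Sg) (t := Finset.univ) (fun z _ => Finset.mem_univ _)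
    have hshape : ∀ j, (Sg.filter (fun z => z.1.2 = j))
        = ((Finset.univ : Finset ((Fin 3 × Fin s) × (Fin 3 × Fin s))).filter
          (fun z => R.Adj z.1 z.2 ∧ z.1.2 = j ∧ G0 z.1 z.2 = 1)) := by
      intro j
      ext z
      simp only [hSgdef, Finset.mem_filter, Finset.mem_univ, true_and]
      tauto
    have heven : Even Sg.card := by
      apply even_card_of_symm (V := Fin 3 × Fin s) Sg
      · intro z hz
        simp only [hSgdef, Finset.mem_filter, Finset.mem_univ, true_and] at hz ⊢
        exact ⟨hz.1.symm, by rw [hG0symm]; exact hz.2⟩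
      · intro z hz
        simp only [hSgdef, Finset.mem_filter, Finset.mem_univ, true_and] at hz
        exact hz.1.ne
    have : ∑ j : Fin s, δ j = ((Sg.card : ℕ) : ZMod 2) := by
      rw [hfib]
      rw [Nat.cast_sum]
      rw [hδdef]
      apply Finset.sum_congr rfl
      intro j _
      rw [hshape j]
    rw [this]
    exact (even_iff_cast _).mp heven
  obtain ⟨D, hDii, hDsymm, hDdeg⟩ := repair (Prod.snd : Fin 3 × Fin s → Fin s) iiP hiisymm hiicross T hconn δ hδsupp hδsum
  set G : (Fin 3 × Fin s) → (Fin 3 × Fin s) → Fin 3 := fun u w =>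
    if (u, w) ∈ D then 2 else G0 u w with hGdef
  have hGsymm : ∀ u w, G u w = G w u := by
    intro u w
    rw [hGdef]; dsimp only
    by_cases hD : (u, w) ∈ D
    · have hD' : (w, u) ∈ D := hDsymm _ hD
      rw [if_pos hD, if_pos hD']
    · have hD' : (w, u) ∉ D := fun hc => hD (symm_mem_swap hDsymm hc)
      rw [if_neg hD, if_neg hD', hG0symm]
  set g : Sym2 (Fin 3 × Fin s) → Fin 3 := Sym2.lift ⟨fun u w => G u w, hGsymm⟩ with hgdef
  have hglift : ∀ u w, g s(u, w) = G u w := by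
    intro u w; rw [hgdef]; exact Sym2.lift_mk _ u w
  have hDf0 : ∀ z ∈ D, f z.1 = 0 ∧ f z.2 = 0 := by
    intro z hz
    obtain ⟨h1, h2⟩ := hii_iT z (hDii hz)
    exact ⟨hfiT _ h1.1 h1.2, hfiT _ h2.1 h2.2⟩
  have hDG01 : ∀ z ∈ D, G0 z.1 z.2 = 1 := by
    intro z hz
    obtain ⟨h1, h2⟩ := hDf0 z hz
    rw [hG0def]; dsimp only
    rw [if_pos h1, if_pos h2]
  refine ⟨f, g, hfinj, ?_, ?_⟩
  · -- avoidance
    intro v w hadj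
    rw [hglift, hGdef]; dsimp only
    by_cases hD : (v, w) ∈ D
    · rw [if_pos hD]
      have := (hDf0 _ hD).1
      rw [this]; decide
    · rw [if_neg hD, hG0def]; dsimp only
      by_cases h1 : f v = 0
      · rw [if_pos h1, h1]
        by_cases h2 : f w = 0
        · rw [if_pos h2]; decide
        · rw [if_neg h2]
          exact fun hc => (fin3_neg_facts (f w) h2).1 hc.symm
      · rw [if_neg h1]
        by_cases h2 : f w = 0
        · rw [if_pos h2]
          exact fun hc => (fin3_neg_facts (f v) h1).2 hc.symm
        · rw [if_neg h2]
          by_cases hnz : (v, w) ∈ NZ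
          · rw [if_pos hnz]
            exact fun hc => (fin3_neg_facts (f v) h1).2 hc.symm
          · rw [if_neg hnz]
            exact h1
  · -- parity
    intro c j
    have hrw : ∀ r : Fin 3, dColor R g c (r, j)
        = ((Finset.univ : Finset (Fin 3 × Fin s)).filter
            fun w => R.Adj (r, j) w ∧ G (r, j) w = c).card := by
      intro r
      rw [dColor_eq_card]
      rfl
    have hsum3 := count_ends R j G c
    rw [Fin.sum_univ_three] at hsum3
    rw [hrw 0, hrw 1, hrw 2, ← hsum3]
    -- the three class-parity facts
    have hGzero : ∀ z : (Fin 3 × Fin s) × (Fin 3 × Fin s), R.Adj z.1 z.2 →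
        (G z.1 z.2 = 0 ↔ z ∈ C) := by
      intro z hadj
      rw [hGdef]; dsimp only
      by_cases hD : (z.1, z.2) ∈ D
      · rw [if_pos hD]
        constructor
        · intro h; exact absurd h (by decide)
        · intro hzC
          exfalso
          have hzEW := hCE hzC
          simp only [hEWdef, Finset.mem_filter, Finset.mem_univ, true_and] at hzEW
          exact hf0ne z.1 ⟨z.2, hadj⟩ hzEW.2.1 ((hDf0 _ hD).1)
      · rw [if_neg hD]
        exact hG0zero z hadj
    have hev0 : Even (((Finset.univ : Finset ((Fin 3 × Fin s) × (Fin 3 × Fin s))).filter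
        (fun z => R.Adj z.1 z.2 ∧ z.1.2 = j ∧ G z.1 z.2 = 0)).card) := by
      have hset : ((Finset.univ : Finset ((Fin 3 × Fin s) × (Fin 3 × Fin s))).filter
          (fun z => R.Adj z.1 z.2 ∧ z.1.2 = j ∧ G z.1 z.2 = 0))
          = C.filter (fun z => z.1.2 = j) := by
        ext z
        simp only [Finset.mem_filter, Finset.mem_univ, true_and]
        constructor
        · rintro ⟨hadj, hc2, h0⟩
          exact ⟨(hGzero z hadj).mp h0, hc2⟩
        · rintro ⟨hzC, hc2⟩
          have hzEW := hCE hzC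
          simp only [hEWdef, Finset.mem_filter, Finset.mem_univ, true_and] at hzEW
          exact ⟨hzEW.1, hc2, (hGzero z hzEW.1).mpr hzC⟩
      rw [hset]
      exact hCeven j
    have hev1 : Even (((Finset.univ : Finset ((Fin 3 × Fin s) × (Fin 3 × Fin s))).filter
        (fun z => R.Adj z.1 z.2 ∧ z.1.2 = j ∧ G z.1 z.2 = 1)).card) := by
      have hS1 : ((Finset.univ : Finset ((Fin 3 × Fin s) × (Fin 3 × Fin s))).filter
          (fun z => R.Adj z.1 z.2 ∧ z.1.2 = j ∧ G z.1 z.2 = 1))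
          = ((Finset.univ : Finset ((Fin 3 × Fin s) × (Fin 3 × Fin s))).filter
            (fun z => R.Adj z.1 z.2 ∧ z.1.2 = j ∧ G0 z.1 z.2 = 1))
            \ (D.filter (fun z => z.1.2 = j)) := by
        ext z
        simp only [Finset.mem_filter, Finset.mem_univ, true_and, Finset.mem_sdiff]
        constructor
        · rintro ⟨hadj, hc2, hG1⟩
          have hzD : z ∉ D := by
            intro hD'
            rw [hGdef] at hG1; dsimp only at hG1
            rw [if_pos hD'] at hG1
            exact absurd hG1 (by decide)
          refine ⟨⟨hadj, hc2, ?_⟩, fun hc => hzD hc.1⟩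
          rw [hGdef] at hG1; dsimp only at hG1
          rw [if_neg hzD] at hG1
          exact hG1
        · rintro ⟨⟨hadj, hc2, hG01⟩, hnD⟩
          have hzD : z ∉ D := fun hD' => hnD ⟨hD', hc2⟩
          refine ⟨hadj, hc2, ?_⟩
          rw [hGdef]; dsimp only
          rw [if_neg hzD]
          exact hG01
      have hsub : (D.filter (fun z => z.1.2 = j))
          ⊆ ((Finset.univ : Finset ((Fin 3 × Fin s) × (Fin 3 × Fin s))).filter
            (fun z => R.Adj z.1 z.2 ∧ z.1.2 = j ∧ G0 z.1 z.2 = 1)) := by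
        intro z hz
        obtain ⟨hzD, hc2⟩ := Finset.mem_filter.mp hz
        have hadj : R.Adj z.1 z.2 := by
          have := hDii hzD
          simp only [hiidef, Finset.mem_filter, Finset.mem_univ, true_and] at this
          exact this.1
        exact Finset.mem_filter.mpr ⟨Finset.mem_univ _, hadj, hc2, hDG01 z hzD⟩
      rw [hS1]
      have hcards := Finset.card_sdiff_add_card_eq_card hsub
      rw [even_iff_cast]
      have hc1 := congrArg (fun n : ℕ => (n : ZMod 2)) hcards
      push_cast at hc1
      have hDd : (((D.filter (fun z => z.1.2 = j)).card : ℕ) : ZMod 2) = δ j := hDdeg j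
      have hδj : (((((Finset.univ : Finset ((Fin 3 × Fin s) × (Fin 3 × Fin s))).filter
          (fun z => R.Adj z.1 z.2 ∧ z.1.2 = j ∧ G0 z.1 z.2 = 1)).card : ℕ)) : ZMod 2)
          = δ j := by rw [hδdef]
      rw [hDd, hδj] at hc1
      linear_combination hc1
    have hpart := Finset.card_eq_sum_card_fiberwise
      (f := fun z : (Fin 3 × Fin s) × (Fin 3 × Fin s) => G z.1 z.2)
      (s := (Finset.univ : Finset ((Fin 3 × Fin s) × (Fin 3 × Fin s))).filter
        (fun z => R.Adj z.1 z.2 ∧ z.1.2 = j))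
      (t := Finset.univ) (fun z _ => Finset.mem_univ _)
    have hshape2 : ∀ c' : Fin 3, ((((Finset.univ :
        Finset ((Fin 3 × Fin s) × (Fin 3 × Fin s))).filter
        (fun z => R.Adj z.1 z.2 ∧ z.1.2 = j)).filter (fun z => G z.1 z.2 = c')))
        = ((Finset.univ : Finset ((Fin 3 × Fin s) × (Fin 3 × Fin s))).filter
          (fun z => R.Adj z.1 z.2 ∧ z.1.2 = j ∧ G z.1 z.2 = c')) := by
      intro c'
      ext z
      simp only [Finset.mem_filter, Finset.mem_univ, true_and]
      tauto
    rw [Fin.sum_univ_three] at hpart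
    rw [hshape2 0, hshape2 1, hshape2 2] at hpart
    have hevD := hDegEven j
    fin_cases c
    · exact hev0
    · exact hev1
    · show Even (((Finset.univ : Finset ((Fin 3 × Fin s) × (Fin 3 × Fin s))).filter
        (fun z => R.Adj z.1 z.2 ∧ z.1.2 = j ∧ G z.1 z.2 = 2)).card)
      rw [hpart] at hevD
      rw [Nat.even_iff] at hev0 hev1 hevD ⊢
      omega
end

section
/- Let R be a 3-row graph with s columns, R_C eulerian, and f the vertex 3-coloring with f(v_{ij}) = i. If f extends to an amiable coloring (f,g) of R, then R has a symmetric parity-coloring. -/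
/-- `d(v, R[V_a ∪ V_b])`: the degree of `v` in the subgraph induced by rows `a`, `b`. -/
noncomputable def dRows {s : ℕ} (R : SimpleGraph (Fin 3 × Fin s)) (a b : Fin 3)
    (v : Fin 3 × Fin s) : ℕ :=
  {w | R.Adj v w ∧ (w.1 = a ∨ w.1 = b)}.ncard

/-- `|N(v) ∩ V_a|`: the number of neighbours of `v` in row `a`. -/
noncomputable def nRow {s : ℕ} (R : SimpleGraph (Fin 3 × Fin s)) (a : Fin 3)
    (v : Fin 3 × Fin s) : ℕ :=
  {w | R.Adj v w ∧ w.1 = a}.ncard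

/-- A symmetric parity-coloring: a black/white coloring `φ` (`true` = black) with
(i) `φ(v₀ⱼ) = φ(v₁ⱼ)` iff `d(v₀ⱼ, R[V₁ ∪ V₂]) ≡ |N(v₁ⱼ) ∩ V₁| (mod 2)`,
(ii) `φ(v₁ⱼ) = φ(v₂ⱼ)` iff `d(v₁ⱼ, R[V₂ ∪ V₃]) ≡ |N(v₂ⱼ) ∩ V₂| (mod 2)`,
(iii) every component of every row has an even number of black vertices.
(Here rows are indexed `0,1,2` instead of the paper's `1,2,3`.) -/
def SymParity {s : ℕ} (R : SimpleGraph (Fin 3 × Fin s))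
    (φ : Fin 3 × Fin s → Bool) : Prop :=
  (∀ j, (φ (0, j) = φ (1, j)) ↔ Even (dRows R 0 1 (0, j) + nRow R 0 (1, j))) ∧
  (∀ j, (φ (1, j) = φ (2, j)) ↔ Even (dRows R 1 2 (1, j) + nRow R 1 (2, j))) ∧
  (∀ i : Fin 3, ∀ K : (R.induce (rowSet s i)).ConnectedComponent,
    Even ({u : rowSet s i | u ∈ K.supp ∧ φ u.val = true}.ncard))

/-!
With `f` the row index, an amiable edge colouring gives every edge between rows `a` and `b` the
third colour, and every edge inside row `a` one of the two colours other than `a`. Colour a vertex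
of row `i` black when it meets an odd number of edges of colour `i + 1` inside its row. These
numbers are the degrees of a spanning subgraph of `R[V_i]`, so by the handshake lemma each
component of a row has an even number of black vertices. For `b = a + 1` and the third row
`c = b + 1`, splitting the neighbourhoods of `v_{aj}` and `v_{bj}` by rows and colours shows that
`d(v_{aj}, R[V_a ∪ V_b]) + |N(v_{bj}) ∩ V_a|` has the parity of the colour-`c` degree sum of
column `j` plus the two counts defining the colours of `v_{aj}` and `v_{bj}`; that sum is even.
-/

namespace Set

theorem ncard_setOf_and_congr {α : Type*} {P p q : α → Prop} (h : ∀ w, P w → (p w ↔ q w)) :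
    {w | P w ∧ p w}.ncard = {w | P w ∧ q w}.ncard :=
  congrArg Set.ncard (Set.ext fun w => and_congr_right (h w))

theorem ncard_setOf_and_or {α : Type*} [Finite α] {P p q : α → Prop}
    (h : ∀ w, P w → p w → ¬ q w) :
    {w | P w ∧ (p w ∨ q w)}.ncard = {w | P w ∧ p w}.ncard + {w | P w ∧ q w}.ncard := by
  rw [← Set.ncard_union_eq]
  · congr 1
    ext w
    simp only [Set.mem_ofPred_eq, Set.mem_union]
    tauto
  · exact Set.disjoint_left.2 fun w hp hq => h w hp.1 hp.2 hq.2

end Set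

namespace SimpleGraph

variable {V : Type*} [Fintype V] {G H : SimpleGraph V} [DecidableRel H.Adj]

theorem even_ncard_odd_degree_of_closed {S : Set V}
    (hS : ∀ v w, v ∈ S → H.Adj v w → w ∈ S) :
    Even {v | v ∈ S ∧ Odd (H.degree v)}.ncard := by
  classical
  have hdeg (v : S) : (H.induce S).degree v = H.degree v :=
    degree_induce_of_neighborSet_subset fun w hw => hS v w v.2 hw
  have hodd := (H.induce S).even_card_odd_degree_vertices
  rw [← Set.ncard_coe_finset, Finset.coe_filter_univ,
    ← Set.ncard_image_of_injective _ Subtype.val_injective] at hodd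
  convert hodd using 2
  ext v
  simp only [Set.mem_ofPred_eq, Set.mem_image, Subtype.exists, exists_and_right, exists_eq_right,
    hdeg]
  exact exists_prop.symm

theorem ConnectedComponent.even_ncard_odd_degree_of_le (hHG : H ≤ G) (K : G.ConnectedComponent) :
    Even {v | v ∈ K.supp ∧ Odd (H.degree v)}.ncard :=
  even_ncard_odd_degree_of_closed fun _ _ hv hadj => K.mem_supp_of_adj_mem_supp hv (hHG hadj)

end SimpleGraph

namespace ThreeRow

theorem fin3_eq_of_ne_of_ne {a b c x : Fin 3} (hab : a ≠ b) (hac : a ≠ c) (hbc : b ≠ c)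
    (hxa : x ≠ a) (hxb : x ≠ b) : x = c := by
  omega

variable {s : ℕ} (R : SimpleGraph (Fin 3 × Fin s)) (g : Sym2 (Fin 3 × Fin s) → Fin 3)

noncomputable def rowColorDeg (c : Fin 3) (v : Fin 3 × Fin s) : ℕ :=
  {w | R.Adj v w ∧ w.1 = v.1 ∧ g s(v, w) = c}.ncard

theorem dRows_eq_nRow_add_nRow {a b : Fin 3} (hab : a ≠ b) (v : Fin 3 × Fin s) :
    dRows R a b v = nRow R a v + nRow R b v :=
  Set.ncard_setOf_and_or fun _ _ ha hb => hab (ha.symm.trans hb)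

variable {R g}

theorem _root_.Amiable.dColor_eq_zero_of_fst_eq (hfg : Amiable R (fun v => v.1) g) {c : Fin 3}
    {v : Fin 3 × Fin s} (hv : v.1 = c) : dColor R g c v = 0 := by
  rw [dColor, Set.ncard_eq_zero]
  exact Set.eq_empty_of_forall_notMem fun w ⟨hvw, hgc⟩ =>
    hfg.2.1 v w hvw (hv.trans hgc.symm)

theorem _root_.Amiable.color_ne_fst_left (hfg : Amiable R (fun v => v.1) g)
    {v w : Fin 3 × Fin s} (h : R.Adj v w) : g s(v, w) ≠ v.1 :=
  fun he => hfg.2.1 v w h he.symm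

theorem _root_.Amiable.color_ne_fst_right (hfg : Amiable R (fun v => v.1) g)
    {v w : Fin 3 × Fin s} (h : R.Adj v w) : g s(v, w) ≠ w.1 := by
  rw [Sym2.eq_swap]; exact hfg.color_ne_fst_left h.symm

section ThreeRows

variable (hfg : Amiable R (fun v => v.1) g) {a b c : Fin 3}
  (hab : a ≠ b) (hac : a ≠ c) (hbc : b ≠ c)
include hfg hab hac hbc

theorem _root_.Amiable.even_dColor_column (j : Fin s) :
    Even (dColor R g c (a, j) + dColor R g c (b, j) + dColor R g c (c, j)) := by
  have huniv : (Finset.univ : Finset (Fin 3)) = {a, b, c} := by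
    ext x; simp only [Finset.mem_univ, Finset.mem_insert, Finset.mem_singleton, true_iff]; omega
  have hsum := hfg.2.2 c j
  rwa [← Fin.sum_univ_three (f := fun i => dColor R g c (i, j)), huniv, Finset.sum_insert
    (by simp [hab, hac]), Finset.sum_pair hbc, ← add_assoc] at hsum

theorem _root_.Amiable.nRow_self_eq {v : Fin 3 × Fin s} (hv : v.1 = a) :
    nRow R a v = rowColorDeg R g b v + rowColorDeg R g c v := by
  rw [nRow, rowColorDeg, rowColorDeg,
    ← Set.ncard_setOf_and_or fun w _ hb hc => hbc (hb.2.symm.trans hc.2)]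
  refine Set.ncard_setOf_and_congr fun w hvw => ⟨fun hw => ?_, ?_⟩
  · have hga : g s(v, w) ≠ a := hv ▸ hfg.color_ne_fst_left hvw
    by_cases hgb : g s(v, w) = b
    · exact .inl ⟨hw.trans hv.symm, hgb⟩
    · exact .inr ⟨hw.trans hv.symm, fin3_eq_of_ne_of_ne hab hac hbc hga hgb⟩
  · rintro (⟨hw, -⟩ | ⟨hw, -⟩) <;> exact hw.trans hv

theorem _root_.Amiable.dColor_eq {v : Fin 3 × Fin s} (hv : v.1 = a) :
    dColor R g c v = rowColorDeg R g c v + nRow R b v := by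
  rw [dColor, rowColorDeg, nRow,
    ← Set.ncard_setOf_and_or fun w _ ha hb => hab (hv ▸ ha.1.symm.trans hb)]
  refine Set.ncard_setOf_and_congr fun w hvw => ⟨fun hgc => ?_, ?_⟩
  · have hwc : w.1 ≠ c := fun h => hfg.color_ne_fst_right hvw (hgc.trans h.symm)
    by_cases hwa : w.1 = a
    · exact .inl ⟨hwa.trans hv.symm, hgc⟩
    · exact .inr (fin3_eq_of_ne_of_ne hac hab hbc.symm hwa hwc)
  · rintro (⟨-, hgc⟩ | hwb)
    · exact hgc
    · exact fin3_eq_of_ne_of_ne hab hac hbc (hv ▸ hfg.color_ne_fst_left hvw)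
        (hwb ▸ hfg.color_ne_fst_right hvw)

theorem _root_.Amiable.even_dRows_add_nRow_add_rowColorDeg (j : Fin s) :
    Even (dRows R a b (a, j) + nRow R a (b, j) +
      (rowColorDeg R g b (a, j) + rowColorDeg R g c (b, j))) := by
  have hcol := hfg.even_dColor_column hab hac hbc j
  rw [hfg.dColor_eq hab hac hbc rfl, hfg.dColor_eq hab.symm hbc hac rfl,
    hfg.dColor_eq_zero_of_fst_eq (v := (c, j)) rfl] at hcol
  rw [dRows_eq_nRow_add_nRow R hab, hfg.nRow_self_eq hab hac hbc rfl]
  rw [Nat.even_iff] at hcol ⊢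
  omega

end ThreeRows

variable (R g)

def rowColorGraph : SimpleGraph (Fin 3 × Fin s) where
  Adj v w := R.Adj v w ∧ w.1 = v.1 ∧ g s(v, w) = v.1 + 1
  symm := ⟨fun _ _ ⟨h, hw, hg⟩ => ⟨h.symm, hw.symm, by rw [Sym2.eq_swap, hw]; exact hg⟩⟩
  loopless := ⟨fun _ h => R.irrefl h.1⟩

theorem rowColorGraph_degree (v : Fin 3 × Fin s) [Fintype ((rowColorGraph R g).neighborSet v)] :
    (rowColorGraph R g).degree v = rowColorDeg R g (v.1 + 1) v := by
  rw [← SimpleGraph.card_neighborSet_eq_degree, ← Nat.card_eq_fintype_card,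
    Nat.card_coe_set_eq]
  rfl

noncomputable def parityColoring (v : Fin 3 × Fin s) : Bool :=
  decide (Odd (rowColorDeg R g (v.1 + 1) v))

variable {R g}

theorem _root_.Amiable.parityColoring_eq_iff (hfg : Amiable R (fun v => v.1) g) {a b : Fin 3}
    (hb : b = a + 1) (j : Fin s) :
    parityColoring R g (a, j) = parityColoring R g (b, j) ↔
      Even (dRows R a b (a, j) + nRow R a (b, j)) := by
  have key := hfg.even_dRows_add_nRow_add_rowColorDeg (a := a) (b := b) (c := b + 1)
    (by omega) (by omega) (by omega) j
  simp only [parityColoring, ← hb, decide_eq_decide, Nat.odd_iff]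
  rw [Nat.even_iff] at key ⊢
  omega

theorem even_ncard_parityColoring_true_of_component (i : Fin 3)
    (K : (R.induce (rowSet s i)).ConnectedComponent) :
    Even {u : rowSet s i | u ∈ K.supp ∧ parityColoring R g u.val = true}.ncard := by
  classical
  let H := (rowColorGraph R g).induce (rowSet s i)
  have hdeg (u : rowSet s i) : H.degree u = rowColorDeg R g (u.1.1 + 1) u := by
    rw [SimpleGraph.degree_induce_of_neighborSet_subset, rowColorGraph_degree]
    exact fun w hw => hw.2.1.trans u.2
  convert K.even_ncard_odd_degree_of_le (H := H) fun _ _ h => h.1 using 4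
  simp [parityColoring, hdeg]

end ThreeRow

theorem stmt11_general {s : ℕ} (R : SimpleGraph (Fin 3 × Fin s))
    (g : Sym2 (Fin 3 × Fin s) → Fin 3)
    (hfg : Amiable R (fun v => v.1) g) :
    ∃ φ : Fin 3 × Fin s → Bool, SymParity R φ :=
  ⟨ThreeRow.parityColoring R g, hfg.parityColoring_eq_iff rfl, hfg.parityColoring_eq_iff rfl,
    ThreeRow.even_ncard_parityColoring_true_of_component⟩

/-- If the row coloring `f (i, j) = i` extends to an amiable coloring of `R`
(with `R_C` eulerian), then `R` has a symmetric parity-coloring. -/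
theorem stmt11 {s : ℕ} (R : SimpleGraph (Fin 3 × Fin s))
    (hcol : ColIndep R) (heul : EulerianRC R)
    (g : Sym2 (Fin 3 × Fin s) → Fin 3)
    (hfg : Amiable R (fun v => v.1) g) :
    ∃ φ : Fin 3 × Fin s → Bool, SymParity R φ :=
  stmt11_general R g hfg
end

section
/- Let R be a 3-row graph with s columns and R_C eulerian, and let f be the vertex 3-coloring with f(v_{ij}) = i. If R has a symmetric parity-coloring, then f extends to an amiable coloring (f,g) of R. -/
/-!
Condition (iii) says that in every component of every row the black vertices are even in
number, so every row `R[Vᵢ]` has a spanning subgraph `Bᵢ` whose odd-degree vertices are exactly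
its black vertices (a `T`-join, obtained by pairing up black vertices of a component and taking
the symmetric difference of paths joining them).

Colour an edge between rows `a ≠ b` with the third colour `-(a + b)`, and an edge inside row `a`
with `a + 1` if it lies in `Bₐ` and with `a + 2` otherwise; no edge gets the colour of one of its
ends. At column `j` the colour `c` then occurs only at `v_{c+1,j}` and `v_{c+2,j}`, and its number
of occurrences differs from `d(v_{c+1,j}, R[V_{c+1} ∪ V_{c+2}]) + |N(v_{c+2,j}) ∩ V_{c+1}|` by the
difference of the `B`-degrees of these two vertices, whose parities are their `φ`-colours.
Conditions (i) and (ii) make it even for `c = 2` and `c = 0`; since the three counts add up to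
the degree of column `j` in `R_C`, which is even, it is even for `c = 1` as well.
-/

open scoped symmDiff
open Finset

theorem Set.ncard_symmDiff_add_two_mul_ncard_inter {α : Type*} {A B : Set α}
    (hA : A.Finite) (hB : B.Finite) :
    (A ∆ B).ncard + 2 * (A ∩ B).ncard = A.ncard + B.ncard := by
  have hsub : A ∩ B ⊆ A ∪ B := Set.inter_subset_left.trans Set.subset_union_left
  have hle : (A ∩ B).ncard ≤ (A ∪ B).ncard := Set.ncard_le_ncard hsub (hA.union hB)
  have := Set.ncard_union_add_ncard_inter A B hA hB
  rw [symmDiff_eq_sup_sdiff_inf]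
  change ((A ∪ B) \ (A ∩ B)).ncard + _ = _
  rw [Set.ncard_sdiff hsub (hA.inter_of_left B)]
  omega

theorem Sym2.ncard_setOf_mk_mem {α : Type*} [DecidableEq α] (E : Finset (Sym2 α)) (v : α) :
    {w | s(v, w) ∈ E}.ncard = #{e ∈ E | v ∈ e} := by
  rw [← Set.ncard_coe_finset, ← Set.ncard_image_of_injective _ (Sym2.mkEmbedding v).injective]
  congr 1
  ext e
  simp only [Set.mem_image, Set.mem_ofPred_eq, coe_filter, Sym2.mkEmbedding_apply]
  constructor
  · rintro ⟨w, hw, rfl⟩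
    exact ⟨hw, Sym2.mem_mk_left v w⟩
  · rintro ⟨he, hv⟩
    exact ⟨Sym2.Mem.other hv, by rwa [Sym2.other_spec hv], Sym2.other_spec hv⟩

namespace SimpleGraph

variable {V : Type*}

def oddDegreeSet (G : SimpleGraph V) : Set V := {v | Odd (G.neighborSet v).ncard}

theorem neighborSet_symmDiff (G H : SimpleGraph V) (v : V) :
    (G ∆ H).neighborSet v = G.neighborSet v ∆ H.neighborSet v := by
  ext w
  simp [symmDiff_def]

theorem oddDegreeSet_symmDiff [Finite V] (G H : SimpleGraph V) :
    (G ∆ H).oddDegreeSet = G.oddDegreeSet ∆ H.oddDegreeSet := by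
  ext v
  have := Set.ncard_symmDiff_add_two_mul_ncard_inter (Set.toFinite (G.neighborSet v))
    (Set.toFinite (H.neighborSet v))
  simp only [oddDegreeSet, Set.mem_symmDiff, Set.mem_ofPred_eq, neighborSet_symmDiff,
    Nat.odd_iff]
  omega

theorem Walk.IsTrail.oddDegreeSet_toSubgraph [DecidableEq V] {G : SimpleGraph V} {u w : V}
    {p : G.Walk u w} (hp : p.IsTrail) (huw : u ≠ w) :
    p.toSubgraph.spanningCoe.oddDegreeSet = {u, w} := by
  ext v
  have hnbr : p.toSubgraph.spanningCoe.neighborSet v = {x | s(v, x) ∈ hp.edgesFinset} := by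
    ext x
    simp only [mem_neighborSet, Subgraph.spanningCoe_adj, Walk.adj_toSubgraph_iff_mem_edges]
    rfl
  have hcount : #{e ∈ hp.edgesFinset | v ∈ e} = p.edges.countP (fun e => v ∈ e) := by
    simp [Finset.filter, Finset.card, List.countP_eq_length_filter]
  rw [oddDegreeSet, Set.mem_ofPred_eq, hnbr, Sym2.ncard_setOf_mk_mem, hcount,
    ← Nat.not_even_iff_odd, hp.even_countP_edges_iff]
  simp only [ne_eq, huw, not_false_eq_true, forall_const, Set.mem_insert_iff,
    Set.mem_singleton_iff]
  tauto

theorem even_ncard_supp_inter_sdiff_pair [Finite V] {G : SimpleGraph V} {T : Set V}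
    (hT : ∀ K : G.ConnectedComponent, Even (K.supp ∩ T).ncard) {w u : V} (hw : w ∈ T)
    (hu : u ∈ T) (hwu : w ≠ u) (hwK : w ∈ (G.connectedComponentMk u).supp)
    (K : G.ConnectedComponent) : Even (K.supp ∩ (T \ {w, u})).ncard := by
  rw [← Set.inter_sdiff_assoc]
  by_cases hK : K = G.connectedComponentMk u
  · subst hK
    have hsub : ({w, u} : Set V) ⊆ (G.connectedComponentMk u).supp ∩ T :=
      Set.pair_subset ⟨hwK, hw⟩ ⟨rfl, hu⟩
    have hle := Set.ncard_le_ncard hsub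
    rw [Set.ncard_pair hwu] at hle
    rw [Set.ncard_sdiff hsub, Set.ncard_pair hwu]
    exact (Nat.even_sub hle).2 (iff_of_true (hT _) even_two)
  · rw [Disjoint.sdiff_eq_left]
    · exact hT K
    refine Set.disjoint_right.2 fun x hx hxK => hK ?_
    rw [← hxK.1]
    rcases hx with rfl | rfl
    exacts [hwK, rfl]

theorem exists_le_oddDegreeSet_eq [Finite V] (G : SimpleGraph V) (T : Set V)
    (hT : ∀ K : G.ConnectedComponent, Even (K.supp ∩ T).ncard) :
    ∃ H ≤ G, H.oddDegreeSet = T := by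
  classical
  induction hn : T.ncard using Nat.strong_induction_on generalizing T with
  | _ n ih =>
  obtain rfl | ⟨u, hu⟩ := T.eq_empty_or_nonempty
  · exact ⟨⊥, bot_le, by ext v; simp [oddDegreeSet]⟩
  set K := G.connectedComponentMk u
  have huK : u ∈ K.supp ∩ T := ⟨rfl, hu⟩
  obtain ⟨w, ⟨hwK, hwT⟩, hwu⟩ : ∃ w ∈ K.supp ∩ T, w ≠ u := by
    refine Set.exists_ne_of_one_lt_ncard ?_ u
    have := (hT K).two_dvd
    have := (Set.ncard_pos (Set.toFinite _)).2 ⟨u, huK⟩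
    omega
  obtain ⟨p, hp⟩ : ∃ p : G.Walk w u, p.IsPath :=
    ⟨_, (ConnectedComponent.exact hwK : G.Reachable w u).some.toPath.2⟩
  have hsub : ({w, u} : Set V) ⊆ T := Set.pair_subset hwT hu
  have hTpos : 0 < T.ncard := (Set.ncard_pos (Set.toFinite T)).2 ⟨u, hu⟩
  obtain ⟨H, hHG, hH⟩ := ih (T \ {w, u}).ncard
    (by rw [Set.ncard_sdiff hsub, Set.ncard_pair hwu]; omega) (T \ {w, u})
    (even_ncard_supp_inter_sdiff_pair hT hwT hu hwu hwK) rfl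
  refine ⟨H ∆ p.toSubgraph.spanningCoe,
    symmDiff_le_sup.trans (sup_le hHG (Subgraph.spanningCoe_le _)), ?_⟩
  rw [oddDegreeSet_symmDiff, hH, hp.isTrail.oddDegreeSet_toSubgraph hwu,
    sdiff_symmDiff_eq_sup, sup_eq_left.2 hsub]

theorem exists_le_oddDegreeSet_eq_of_induce [Finite V] (G : SimpleGraph V) (U T : Set V)
    (hT : ∀ K : (G.induce U).ConnectedComponent, Even {u | u ∈ K.supp ∧ u.val ∈ T}.ncard) :
    ∃ H ≤ G, (∀ v w, H.Adj v w → v ∈ U) ∧ ∀ v ∈ U, (v ∈ H.oddDegreeSet ↔ v ∈ T) := by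
  obtain ⟨H, hHG, hH⟩ := (G.induce U).exists_le_oddDegreeSet_eq (Subtype.val ⁻¹' T) hT
  refine ⟨H.map (Function.Embedding.subtype U), (map_le_iff_le_comap _ _ _).2 hHG, ?_, ?_⟩
  · rintro _ _ ⟨-, a, b, -, rfl, -⟩
    exact a.2
  · intro v hv
    have hnbr : (H.map (Function.Embedding.subtype U)).neighborSet v =
        Subtype.val '' H.neighborSet ⟨v, hv⟩ := H.neighborSet_map _ ⟨v, hv⟩
    rw [oddDegreeSet, Set.mem_ofPred_eq, hnbr,
      Set.ncard_image_of_injective _ Subtype.val_injective]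
    exact Set.ext_iff.1 hH ⟨v, hv⟩

end SimpleGraph

open SimpleGraph

theorem sum_dColor {s : ℕ} (R : SimpleGraph (Fin 3 × Fin s)) (g : Sym2 (Fin 3 × Fin s) → Fin 3)
    (v : Fin 3 × Fin s) : ∑ c, dColor R g c v = (R.neighborSet v).ncard := by
  classical
  simp only [dColor, Set.ncard_eq_toFinset_card', Set.toFinset_ofPred]
  rw [card_eq_sum_card_fiberwise (f := fun w => g s(v, w)) (t := univ) fun _ _ => mem_univ _]
  refine sum_congr rfl fun c _ => congrArg _ ?_
  ext w
  simp

section RowEdgeColoring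

variable {s : ℕ} (B : Fin 3 → SimpleGraph (Fin 3 × Fin s))

open Classical in
noncomputable def rowEdgeColoring : Sym2 (Fin 3 × Fin s) → Fin 3 :=
  Sym2.lift ⟨fun v w => if v.1 = w.1 then (if (B v.1).Adj v w then v.1 + 1 else v.1 + 2)
    else -(v.1 + w.1), fun v w => by
      by_cases h : v.1 = w.1
      · simp only [h, if_true, (B w.1).adj_comm v w]
      · simp only [h, Ne.symm h, if_false, add_comm]⟩

open Classical in
theorem rowEdgeColoring_mk (v w : Fin 3 × Fin s) :
    rowEdgeColoring B s(v, w) = if v.1 = w.1 then (if (B v.1).Adj v w then v.1 + 1 else v.1 + 2)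
      else -(v.1 + w.1) := rfl

theorem rowEdgeColoring_ne_fst (v w : Fin 3 × Fin s) : rowEdgeColoring B s(v, w) ≠ v.1 := by
  rw [rowEdgeColoring_mk]
  generalize (B v.1).Adj v w = p
  generalize v.1 = a, w.1 = b
  by_cases hp : p
  · simp only [hp, if_true]; revert a b; decide
  · simp only [hp, if_false]; revert a b; decide

theorem rowEdgeColoring_eq_fst_add_one_iff (v w : Fin 3 × Fin s) :
    rowEdgeColoring B s(v, w) = v.1 + 1 ↔ w.1 = v.1 ∧ (B v.1).Adj v w ∨ w.1 = v.1 + 2 := by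
  rw [rowEdgeColoring_mk]
  generalize (B v.1).Adj v w = p
  generalize v.1 = a, w.1 = b
  by_cases hp : p
  · simp only [hp, if_true]; revert a b; decide
  · simp only [hp, if_false]; revert a b; decide

theorem rowEdgeColoring_eq_fst_add_two_iff (v w : Fin 3 × Fin s) :
    rowEdgeColoring B s(v, w) = v.1 + 2 ↔ w.1 = v.1 ∧ ¬ (B v.1).Adj v w ∨ w.1 = v.1 + 1 := by
  rw [rowEdgeColoring_mk]
  generalize (B v.1).Adj v w = p
  generalize v.1 = a, w.1 = b
  by_cases hp : p
  · simp only [hp, if_true]; revert a b; decide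
  · simp only [hp, if_false]; revert a b; decide

theorem dColor_rowEdgeColoring_fst (R : SimpleGraph (Fin 3 × Fin s)) (v : Fin 3 × Fin s) :
    dColor R (rowEdgeColoring B) v.1 v = 0 := by
  simp [dColor, rowEdgeColoring_ne_fst]

variable {B} {R : SimpleGraph (Fin 3 × Fin s)} (hBR : ∀ a, B a ≤ R)
  (hB : ∀ a v w, (B a).Adj v w → v.1 = a)
include hBR hB

theorem dColor_rowEdgeColoring_fst_add_one (v : Fin 3 × Fin s) :
    dColor R (rowEdgeColoring B) (v.1 + 1) v =
      ((B v.1).neighborSet v).ncard + nRow R (v.1 + 2) v := by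
  have hrow : ∀ w, (B v.1).Adj v w → w.1 = v.1 := fun w h => hB _ _ _ h.symm
  have hset : {w | R.Adj v w ∧ rowEdgeColoring B s(v, w) = v.1 + 1} =
      (B v.1).neighborSet v ∪ {w | R.Adj v w ∧ w.1 = v.1 + 2} := by
    ext w
    simp only [Set.mem_ofPred_eq, Set.mem_union, mem_neighborSet,
      rowEdgeColoring_eq_fst_add_one_iff]
    constructor
    · rintro ⟨hvw, ⟨-, hBvw⟩ | hw⟩
      exacts [Or.inl hBvw, Or.inr ⟨hvw, hw⟩]
    · rintro (hBvw | ⟨hvw, hw⟩)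
      exacts [⟨hBR _ hBvw, Or.inl ⟨hrow w hBvw, hBvw⟩⟩, ⟨hvw, Or.inr hw⟩]
  have hdisj : Disjoint ((B v.1).neighborSet v) {w | R.Adj v w ∧ w.1 = v.1 + 2} :=
    Set.disjoint_left.2 fun w hBvw hw => by have := (hrow w hBvw).symm.trans hw.2; omega
  rw [dColor, hset, Set.ncard_union_eq hdisj]
  rfl

theorem dColor_rowEdgeColoring_fst_add_two_add (v : Fin 3 × Fin s) :
    dColor R (rowEdgeColoring B) (v.1 + 2) v + ((B v.1).neighborSet v).ncard =
      dRows R v.1 (v.1 + 1) v := by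
  have hrow : ∀ w, (B v.1).Adj v w → w.1 = v.1 := fun w h => hB _ _ _ h.symm
  have hset : {w | R.Adj v w ∧ (w.1 = v.1 ∨ w.1 = v.1 + 1)} =
      {w | R.Adj v w ∧ rowEdgeColoring B s(v, w) = v.1 + 2} ∪ (B v.1).neighborSet v := by
    ext w
    simp only [Set.mem_ofPred_eq, Set.mem_union, mem_neighborSet,
      rowEdgeColoring_eq_fst_add_two_iff]
    by_cases hBvw : (B v.1).Adj v w
    · simp [hBvw, hBR _ hBvw, hrow w hBvw]
    · tauto
  have hdisj : Disjoint {w | R.Adj v w ∧ rowEdgeColoring B s(v, w) = v.1 + 2}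
      ((B v.1).neighborSet v) := by
    refine Set.disjoint_left.2 fun w hw hBvw => ?_
    rw [Set.mem_ofPred_eq, rowEdgeColoring_eq_fst_add_two_iff, hrow w hBvw] at hw
    rcases hw.2 with ⟨-, hnot⟩ | h
    exacts [hnot hBvw, by omega]
  rw [dRows, hset, Set.ncard_union_eq hdisj]
  rfl

theorem sum_dColor_rowEdgeColoring_add (c : Fin 3) (j : Fin s) :
    ∑ i, dColor R (rowEdgeColoring B) c (i, j) + ((B (c + 1)).neighborSet (c + 1, j)).ncard =
      dRows R (c + 1) (c + 2) (c + 1, j) + nRow R (c + 1) (c + 2, j) +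
        ((B (c + 2)).neighborSet (c + 2, j)).ncard := by
  rw [← Equiv.sum_comp (Equiv.addLeft c), Fin.sum_univ_three]
  have h0 := dColor_rowEdgeColoring_fst B R (c, j)
  have h1 := dColor_rowEdgeColoring_fst_add_two_add hBR hB (c + 1, j)
  have h2 := dColor_rowEdgeColoring_fst_add_one hBR hB (c + 2, j)
  have e1 : c + 1 + 2 = c := by omega
  have e2 : c + 1 + 1 = c + 2 := by omega
  have e3 : c + 2 + 1 = c := by omega
  have e4 : c + 2 + 2 = c + 1 := by omega
  dsimp only at h0 h1 h2
  simp only [e1, e2, e3, e4] at h1 h2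
  simp only [Equiv.coe_addLeft, add_zero]
  omega

theorem even_sum_dColor_rowEdgeColoring (φ : Fin 3 × Fin s → Bool) (c : Fin 3) (j : Fin s)
    (hodd : ∀ a, Odd ((B a).neighborSet (a, j)).ncard ↔ φ (a, j) = true)
    (hφ : φ (c + 1, j) = φ (c + 2, j) ↔
      Even (dRows R (c + 1) (c + 2) (c + 1, j) + nRow R (c + 1) (c + 2, j))) :
    Even (∑ i, dColor R (rowEdgeColoring B) c (i, j)) := by
  have h := sum_dColor_rowEdgeColoring_add hBR hB c j
  rw [Bool.eq_iff_iff, ← hodd, ← hodd, Nat.even_iff, Nat.odd_iff, Nat.odd_iff] at hφ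
  rw [Nat.even_iff]
  omega

end RowEdgeColoring

theorem stmt12_general {s : ℕ} (R : SimpleGraph (Fin 3 × Fin s))
    (heul : EulerianRC R)
    (φ : Fin 3 × Fin s → Bool) (hφ : SymParity R φ) :
    ∃ g : Sym2 (Fin 3 × Fin s) → Fin 3, Amiable R (fun v => v.1) g := by
  obtain ⟨hφ01, hφ12, hφrow⟩ := hφ
  choose B hBR hBrow hBodd using fun i =>
    R.exists_le_oddDegreeSet_eq_of_induce (rowSet s i) {v | φ v = true} (hφrow i)
  refine ⟨rowEdgeColoring B, fun _ _ _ h => h, fun v w _ => (rowEdgeColoring_ne_fst B v w).symm,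
    fun c j => ?_⟩
  rw [← Fin.sum_univ_three (fun i => dColor R (rowEdgeColoring B) c (i, j))]
  have hodd a : Odd ((B a).neighborSet (a, j)).ncard ↔ φ (a, j) = true := hBodd a (a, j) rfl
  have h0 := even_sum_dColor_rowEdgeColoring hBR hBrow φ 0 j hodd (hφ12 j)
  have h2 := even_sum_dColor_rowEdgeColoring hBR hBrow φ 2 j hodd (hφ01 j)
  have htotal : Even (∑ c, ∑ i, dColor R (rowEdgeColoring B) c (i, j)) := by
    rw [Finset.sum_comm]
    simp only [sum_dColor]
    rw [Fin.sum_univ_three]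
    exact heul j
  rw [Fin.sum_univ_three] at htotal
  fin_cases c
  · exact h0
  · exact Nat.even_add.1 ((Nat.even_add.1 htotal).2 h2) |>.1 h0
  · exact h2

/-- If `R` (with `R_C` eulerian) has a symmetric parity-coloring, then the row
coloring `f (i, j) = i` extends to an amiable coloring of `R`. -/
theorem stmt12 {s : ℕ} (R : SimpleGraph (Fin 3 × Fin s))
    (hcol : ColIndep R) (heul : EulerianRC R)
    (φ : Fin 3 × Fin s → Bool) (hφ : SymParity R φ) :
    ∃ g : Sym2 (Fin 3 × Fin s) → Fin 3, Amiable R (fun v => v.1) g :=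
  stmt12_general R heul φ hφ
end

section
/- Let G be a connected cubic graph with a Kotzig-frame F and a perfect coloring α of F. Then the graph R(G,F,α)_C, obtained from the 3-row graph R(G,F,α) by identifying each column to a single vertex, is eulerian (every vertex has even degree). -/
/-!
Counting edge-ends at the vertices of a set `S` in a cubic graph gives
`3 |S| = 2 (edges inside S) + (edges leaving S)`, so the number of edges leaving `S` has the
parity of `|S|`. Every component of a Kotzig-frame has an even number of vertices, and the
degree of its vertex in `R(G,F,α)_C` is the number of edges of `G` leaving it.
-/

/-- The bicolored subgraph of `F`: the edges of `F` colored `a` or `b` by the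
edge coloring `αE`. -/
def bicolored {V : Type*} (F : SimpleGraph V) (αE : Sym2 V → Fin 3) (a b : Fin 3) :
    SimpleGraph V where
  Adj v w := F.Adj v w ∧ (αE s(v, w) = a ∨ αE s(v, w) = b)
  symm := by
    constructor
    intro v w h
    refine ⟨h.1.symm, ?_⟩
    rw [Sym2.eq_swap]
    exact h.2
  loopless := ⟨fun v h => F.irrefl h.1⟩

open Finset

namespace SimpleGraph

variable {V : Type*} (G : SimpleGraph V)

def edgeBoundary (S : Set V) : Set (Sym2 V) :=
  {e | e ∈ G.edgeSet ∧ ∃ v w, e = s(v, w) ∧ v ∈ S ∧ w ∉ S}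

variable [Fintype V] [DecidableEq V] [DecidableRel G.Adj] (S : Finset V)

theorem ncard_edgeBoundary :
    (G.edgeBoundary S).ncard = #{p : V × V | G.Adj p.1 p.2 ∧ p.1 ∈ S ∧ p.2 ∉ S} := by
  have hinj : Set.InjOn (fun p : V × V => s(p.1, p.2))
      {p : V × V | G.Adj p.1 p.2 ∧ p.1 ∈ S ∧ p.2 ∉ S} := by
    rintro ⟨v, w⟩ hvw ⟨v', w'⟩ hvw' h
    rcases Sym2.eq_iff.1 h with ⟨rfl, rfl⟩ | ⟨rfl, rfl⟩
    · rfl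
    · exact absurd hvw'.2.1 hvw.2.2
  rw [← Set.ncard_coe_finset, coe_filter_univ, ← hinj.ncard_image]
  congr 1
  ext e
  constructor
  · rintro ⟨he, v, w, rfl, hv, hw⟩
    exact ⟨(v, w), ⟨he, hv, hw⟩, rfl⟩
  · rintro ⟨⟨v, w⟩, ⟨hvw, hv, hw⟩, rfl⟩
    exact ⟨hvw, v, w, rfl, hv, hw⟩

theorem two_mul_ncard_edgeSet_induce_spanningCoe :
    2 * (G.induce (S : Set V)).spanningCoe.edgeSet.ncard =
      #{p : V × V | G.Adj p.1 p.2 ∧ p.1 ∈ S ∧ p.2 ∈ S} := by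
  classical
  rw [Set.ncard_eq_toFinset_card', ← edgeFinset, two_mul_card_edgeFinset]
  congr 1
  ext ⟨v, w⟩
  simp

theorem sum_degree_eq_card_adj_fst_mem :
    ∑ v ∈ S, G.degree v = #{p : V × V | G.Adj p.1 p.2 ∧ p.1 ∈ S} := by
  rw [card_eq_sum_card_fiberwise (f := Prod.fst) (t := S) (fun p hp => (mem_filter.1 hp).2.2)]
  refine sum_congr rfl fun v hv => ?_
  rw [← card_neighborFinset_eq_degree, ← card_map ⟨fun w => (v, w), Prod.mk_right_injective v⟩]
  congr 1
  ext ⟨x, y⟩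
  simp only [mem_filter, mem_univ, true_and, mem_map, mem_neighborFinset,
    Function.Embedding.coeFn_mk, Prod.mk.injEq]
  constructor
  · rintro ⟨w, hw, rfl, rfl⟩
    exact ⟨⟨hw, hv⟩, rfl⟩
  · rintro ⟨⟨hxy, -⟩, rfl⟩
    exact ⟨y, hxy, rfl, rfl⟩

theorem sum_degree_eq_two_mul_add_ncard_edgeBoundary :
    ∑ v ∈ S, G.degree v =
      2 * (G.induce (S : Set V)).spanningCoe.edgeSet.ncard + (G.edgeBoundary S).ncard := by
  rw [sum_degree_eq_card_adj_fst_mem, two_mul_ncard_edgeSet_induce_spanningCoe,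
    ncard_edgeBoundary, ← card_filter_add_card_filter_not (fun p : V × V => p.2 ∈ S),
    filter_filter, filter_filter]
  simp only [and_assoc]

theorem even_ncard_edgeBoundary_iff :
    Even (G.edgeBoundary S).ncard ↔ Even (∑ v ∈ S, G.degree v) := by
  rw [sum_degree_eq_two_mul_add_ncard_edgeBoundary, Nat.even_add, iff_true_left (even_two_mul _)]

variable {G} in
theorem IsRegularOfDegree.even_ncard_edgeBoundary_iff {d : ℕ} (hG : G.IsRegularOfDegree d)
    (hd : Odd d) : Even (G.edgeBoundary S).ncard ↔ Even #S := by
  rw [SimpleGraph.even_ncard_edgeBoundary_iff, sum_congr rfl fun v _ => hG v, sum_const,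
    smul_eq_mul, Nat.even_mul, or_iff_left (Nat.not_even_iff_odd.2 hd)]

end SimpleGraph

theorem stmt17_general {V : Type*} [Fintype V] (G : SimpleGraph V)
    (hcubic : ∀ v, (G.neighborSet v).ncard = 3)
    (F : SimpleGraph V)
    (heven : ∀ K : F.ConnectedComponent, Even K.supp.ncard) :
    ∀ K : F.ConnectedComponent,
      Even ({e : Sym2 V | e ∈ G.edgeSet ∧
        ∃ v w, e = s(v, w) ∧ v ∈ K.supp ∧ w ∉ K.supp}.ncard) := by
  classical
  intro K
  have hreg : G.IsRegularOfDegree 3 := fun v => by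
    rw [← SimpleGraph.card_neighborSet_eq_degree, ← Nat.card_eq_fintype_card,
      Nat.card_coe_set_eq, hcubic]
  have hS : Even #K.supp.toFinset := by rw [← Set.ncard_eq_toFinset_card']; exact heven K
  simpa only [Set.coe_toFinset, SimpleGraph.edgeBoundary] using
    (hreg.even_ncard_edgeBoundary_iff K.supp.toFinset (by decide)).2 hS

/-- Let `G` be a connected cubic graph with a Kotzig-frame `F` — a spanning
subgraph each of whose components `K` has an even number of vertices and is
either a cycle (a 2-regular component) or a subdivision of a Kotzig graph — and
let `(αV, αE)` be a perfect coloring of `F`: on every cycle component all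
vertices and edges get one common color; on every other component (a subdivision
of a Kotzig graph, i.e. all degrees are `2` or `3`, some vertex is 3-valent and
some vertex is 2-valent) the two edges at each 2-valent vertex get the color of
that vertex, the three edges at each 3-valent vertex get pairwise distinct colors
(so the induced edge coloring of the underlying cubic graph is proper), and for
each pair of distinct colors `a ≠ b` the edges of `F` colored `a` or `b` inside
the component form a single cycle through all of its 3-valent vertices (so the
induced coloring of the underlying Kotzig graph is a Kotzig-coloring).

Then the graph `R(G,F,α)_C`, obtained from the 3-row graph `R(G,F,α)` by
identifying each column to a single vertex, is eulerian; that is, for every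
component `K` of `F`, the degree of the corresponding vertex of `R(G,F,α)_C` —
the number of edges of `G` joining `K` to the other components of `F` — is
even. -/
theorem stmt17 {V : Type*} [Fintype V] (G : SimpleGraph V)
    (hGconn : G.Connected)
    (hcubic : ∀ v, (G.neighborSet v).ncard = 3)
    (F : SimpleGraph V) (hFG : F ≤ G)
    (heven : ∀ K : F.ConnectedComponent, Even K.supp.ncard)
    (αV : V → Fin 3) (αE : Sym2 V → Fin 3)
    (hframe : ∀ K : F.ConnectedComponent,
      -- C-component: a cycle, all of whose vertices and edges get one color
      ((∀ v ∈ K.supp, (F.neighborSet v).ncard = 2) ∧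
        ∃ a : Fin 3, ∀ v ∈ K.supp, αV v = a ∧ ∀ w, F.Adj v w → αE s(v, w) = a)
      ∨
      -- K-component: a perfectly colored subdivision of a Kotzig graph
      ((∀ v ∈ K.supp, (F.neighborSet v).ncard = 2 ∨ (F.neighborSet v).ncard = 3) ∧
       (∃ v ∈ K.supp, (F.neighborSet v).ncard = 3) ∧
       (∃ v ∈ K.supp, (F.neighborSet v).ncard = 2) ∧
       (∀ v ∈ K.supp, (F.neighborSet v).ncard = 2 →
          ∀ w, F.Adj v w → αE s(v, w) = αV v) ∧
       (∀ v ∈ K.supp, ∀ w w', F.Adj v w → F.Adj v w' → w ≠ w' →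
          αE s(v, w) ≠ αE s(v, w')) ∧
       (∀ a b : Fin 3, a ≠ b →
          -- the edges colored `a` or `b` form a single cycle containing
          -- every 3-valent vertex of the component
          (∀ v ∈ K.supp,
            ((bicolored F αE a b).neighborSet v).Nonempty →
              ((bicolored F αE a b).neighborSet v).ncard = 2) ∧
          (∀ v ∈ K.supp, (F.neighborSet v).ncard = 3 →
              ((bicolored F αE a b).neighborSet v).Nonempty) ∧
          (∀ v ∈ K.supp, ∀ w ∈ K.supp,
            ((bicolored F αE a b).neighborSet v).Nonempty →
            ((bicolored F αE a b).neighborSet w).Nonempty →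
              (bicolored F αE a b).Reachable v w)))) :
    ∀ K : F.ConnectedComponent,
      Even ({e : Sym2 V | e ∈ G.edgeSet ∧
        ∃ v w, e = s(v, w) ∧ v ∈ K.supp ∧ w ∉ K.supp}.ncard) :=
  stmt17_general G hcubic F heven
end
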